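/- arXiv:1208.2792 — 8 statements merged into one kernel-verified Lean document; each statement's English description precedes it below -/
import Mathlib

section
/- A group G has the matching property if and only if G is torsion-free or cyclic of prime order. -/
/-- A matching from the finite subset `A` to the finite subset `B` of a group `G`
is (witnessed by) a map `f` restricting to a bijection from `A` onto `B`
such that `a * f a ∉ A` for all `a ∈ A`. -/
def IsGroupMatching {G : Type*} [Group G] (A B : Finset G) (f : G → G) : Prop :=
  Set.BijOn f A B ∧ ∀ a ∈ A, a * f a ∉ A

/-- `G` has the matching property if for all nonempty finite subsets `A, B` of `G`
with `|A| = |B|` and `1 ∉ B`, there exists a matching from `A` to `B`. -/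
def HasMatchingProperty (G : Type*) [Group G] : Prop :=
  ∀ A B : Finset G, A.Nonempty → B.Nonempty → A.card = B.card → (1 : G) ∉ B →
    ∃ f : G → G, IsGroupMatching A B f

/-!
Necessity: if `H` is a finite subgroup with `1 ≠ h ∈ H` and `y ∉ H`, there is no matching from
`H` to `(H \ {1}) ∪ {y}`: `H` is closed under multiplication, so every element of `H` would have
to be matched with `y`. Hence every finite subgroup is trivial or all of `G`, which forces `G` to
be torsion-free or cyclic of prime order.

Sufficiency: both kinds of groups satisfy `|G| ≤ minOrder G`, and `1 ∉ B` gives `|A| < |G|`.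
Apply Hall's marriage theorem to the relation `a * b ∉ A` between `A` and `B`. If some `S ⊆ A`
had fewer than `|S|` neighbours, the set `T` of its non-neighbours in `B` would satisfy
`|S| + |T| > |A|` and `S * ({1} ∪ T) ⊆ A`, contradicting the Cauchy–Davenport inequality
`min (minOrder G) (|S| + |T|) ≤ |S * ({1} ∪ T)|`.
-/

open Finset Monoid
open scoped Pointwise

section

variable {G : Type*} [Group G]

theorem Subgroup.eq_bot_or_eq_top_of_hasMatchingProperty (h : HasMatchingProperty G)
    {H : Subgroup G} (hH : (H : Set G).Finite) : H = ⊥ ∨ H = ⊤ := by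
  classical
  refine or_iff_not_imp_right.2 fun hH_top => ?_
  obtain ⟨y, hy⟩ : ∃ y, y ∉ H := by simpa [Subgroup.eq_top_iff'] using hH_top
  set A := hH.toFinset
  have hmemA : ∀ g, g ∈ A ↔ g ∈ H := fun g => hH.mem_toFinset
  have h1A : (1 : G) ∈ A := (hmemA 1).2 H.one_mem
  set B := insert y (A.erase 1)
  have hyA : y ∉ A.erase 1 := fun hyA => hy ((hmemA y).1 (mem_of_mem_erase hyA))
  have h1B : (1 : G) ∉ B := by
    simp only [B, mem_insert, mem_erase, ne_eq, not_true_eq_false, false_and, or_false]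
    exact fun h1y => hy (h1y ▸ H.one_mem)
  have hAB : #A = #B := by
    rw [card_insert_of_notMem hyA, card_erase_add_one h1A]
  obtain ⟨f, ⟨hmaps, hinj, -⟩, hnot⟩ := h A B ⟨1, h1A⟩ ⟨y, mem_insert_self _ _⟩ hAB h1B
  have hf : ∀ a ∈ A, f a = y := by
    intro a ha
    rcases mem_insert.1 (hmaps (mem_coe.2 ha)) with hfa | hfa
    · exact hfa
    · exact absurd ((hmemA _).2 (H.mul_mem ((hmemA a).1 ha) ((hmemA _).1 (mem_of_mem_erase hfa))))
        (hnot a ha)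
  refine (Subgroup.eq_bot_iff_forall H).2 fun a ha => ?_
  have ha' : a ∈ A := (hmemA a).2 ha
  exact hinj (mem_coe.2 ha') (mem_coe.2 h1A) ((hf a ha').trans (hf 1 h1A).symm)

theorem isCyclic_and_prime_card_of_forall_finite_subgroup
    (hG : ∀ H : Subgroup G, (H : Set G).Finite → H = ⊥ ∨ H = ⊤)
    {x : G} (hx : IsOfFinOrder x) (hx1 : x ≠ 1) : IsCyclic G ∧ (Nat.card G).Prime := by
  have htop : Subgroup.zpowers x = ⊤ :=
    (hG _ hx.finite_zpowers).resolve_left (Subgroup.zpowers_ne_bot.2 hx1)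
  have : IsCyclic G := isCyclic_iff_exists_zpowers_eq_top.2 ⟨x, htop⟩
  have : Finite G := Set.finite_univ_iff.1 (by simpa [htop] using hx.finite_zpowers)
  have : IsSimpleGroup G :=
    { exists_pair_ne := ⟨x, 1, hx1⟩
      eq_bot_or_eq_top_of_normal := fun H _ => hG H (Set.toFinite _) }
  exact ⟨inferInstance, Group.is_simple_iff_prime_card.1 this⟩

theorem card_add_card_le_of_mul_insert_one_subset [DecidableEq G] {A S T : Finset G}
    (hA : (#A : ℕ∞) < minOrder G) (hS : S.Nonempty) (h1T : (1 : G) ∉ T)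
    (hST : S * insert 1 T ⊆ A) : #S + #T ≤ #A := by
  have hle : (#(S * insert 1 T) : ℕ∞) ≤ #A := by exact_mod_cast card_le_card hST
  have hcd := cauchy_davenport_minOrder_mul hS (insert_nonempty 1 T)
  rw [card_insert_of_notMem h1T, ← add_assoc, Nat.add_sub_cancel] at hcd
  rcases min_le_iff.1 hcd with hmin | hST
  · exact absurd (hmin.trans hle) (not_le.2 hA)
  · exact_mod_cast hST.trans hle

theorem exists_isGroupMatching_of_injective {A B : Finset G} (hAB : #B ≤ #A)
    (f : A → G) (hf : Function.Injective f) (hfB : ∀ a, f a ∈ B) (hfA : ∀ a : A, a.1 * f a ∉ A) :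
    ∃ g : G → G, IsGroupMatching A B g := by
  classical
  set g : G → G := fun x => if hx : x ∈ A then f ⟨x, hx⟩ else 1
  have hg : ∀ a (ha : a ∈ A), g a = f ⟨a, ha⟩ := fun a ha => dif_pos ha
  have hmaps : Set.MapsTo g A B := fun a ha => by
    rw [hg a ha]; exact hfB _
  have hinj : Set.InjOn g A := fun a ha b hb hab => by
    rw [hg a ha, hg b hb] at hab
    exact congrArg Subtype.val (hf hab)
  refine ⟨g, ⟨hmaps, hinj, surjOn_of_injOn_of_card_le g hmaps hinj hAB⟩, fun a ha => ?_⟩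
  rw [hg a ha]
  exact hfA ⟨a, ha⟩

theorem exists_isGroupMatching_of_card_lt_minOrder {A B : Finset G} (hAB : #A = #B)
    (h1B : (1 : G) ∉ B) (hA : (#A : ℕ∞) < minOrder G) :
    ∃ f : G → G, IsGroupMatching A B f := by
  classical
  set t : A → Finset G := fun a => B.filter (fun b => a.1 * b ∉ A)
  have hall : ∀ s : Finset A, #s ≤ #(s.biUnion t) := by
    intro s
    by_contra! hlt
    set N := s.biUnion t
    have hNB : N ⊆ B := biUnion_subset.2 fun a _ => filter_subset _ _
    have hST : s.map (Function.Embedding.subtype _) * insert 1 (B \ N) ⊆ A := by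
      intro g hg
      obtain ⟨a', ha', b, hb, rfl⟩ := mem_mul.1 hg
      obtain ⟨a, ha, rfl⟩ := mem_map.1 ha'
      rcases mem_insert.1 hb with rfl | hb
      · simp
      · by_contra hab
        exact (mem_sdiff.1 hb).2 (mem_biUnion.2 ⟨a, ha, mem_filter.2 ⟨(mem_sdiff.1 hb).1, hab⟩⟩)
    have hs : (s.map (Function.Embedding.subtype _)).Nonempty :=
      (card_pos.1 (by omega)).map
    have := card_add_card_le_of_mul_insert_one_subset hA hs
      (fun h1 => h1B (sdiff_subset h1)) hST
    rw [card_map, card_sdiff_of_subset hNB] at this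
    have := card_le_card hNB
    omega
  obtain ⟨f, hf, hft⟩ := (all_card_le_biUnion_card_iff_exists_injective t).1 hall
  exact exists_isGroupMatching_of_injective hAB.ge f hf (fun a => (mem_filter.1 (hft a)).1)
    (fun a => (mem_filter.1 (hft a)).2)

theorem hasMatchingProperty_of_enatCard_le_minOrder (hG : ENat.card G ≤ minOrder G) :
    HasMatchingProperty G := by
  intro A B _ _ hAB h1B
  refine exists_isGroupMatching_of_card_lt_minOrder hAB h1B (lt_of_lt_of_le ?_ hG)
  have hB : (B : Set G) ⊂ Set.univ :=
    Set.ssubset_univ_iff.2 fun hB => h1B (mem_coe.1 (hB ▸ Set.mem_univ 1))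
  simpa [hAB] using (B.finite_toSet.encard_lt_encard hB)

theorem enatCard_le_minOrder_of_prime_card (hp : (Nat.card G).Prime) :
    ENat.card G ≤ minOrder G := by
  have : Finite G := Nat.finite_of_card_ne_zero hp.ne_zero
  rw [ENat.card_eq_coe_natCard]
  refine le_minOrder.2 fun a ha _ => ?_
  rcases hp.eq_one_or_self_of_dvd _ (orderOf_dvd_natCard a) with h1 | hcard
  · exact absurd (orderOf_eq_one_iff.1 h1) ha
  · exact_mod_cast hcard.ge

end

/-- A group `G` has the matching property iff `G` is torsion-free or cyclic of prime order. -/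
theorem matching_property_iff (G : Type*) [Group G] :
    HasMatchingProperty G ↔
      (∀ g : G, g ≠ 1 → ¬IsOfFinOrder g) ∨ (IsCyclic G ∧ (Nat.card G).Prime) := by
  constructor
  · intro h
    refine or_iff_not_imp_left.2 fun hG => ?_
    obtain ⟨x, hx1, hx⟩ : ∃ x : G, x ≠ 1 ∧ IsOfFinOrder x := by simpa using hG
    exact isCyclic_and_prime_card_of_forall_finite_subgroup
      (fun H hH => H.eq_bot_or_eq_top_of_hasMatchingProperty h hH) hx hx1
  · rintro (hG | ⟨-, hp⟩) <;> apply hasMatchingProperty_of_enatCard_le_minOrder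
    · exact le_top.trans (le_minOrder.2 fun a ha hfin => absurd hfin (hG a ha))
    · exact enatCard_le_minOrder_of_prime_card hp
end

section
/- Let G be a group and B a nonempty finite subset of G. Then there exists a matching from B to B if and only if 1 ∉ B. -/
/-!
If `1 ∈ B`, then `1 * f 1 = f 1 ∈ B` for every bijection `f` of `B`. Conversely, by Hall's
theorem it suffices that for every `S ⊆ B` the set `N` of those `c ∈ B` with `a * c ∉ B` for
some `a ∈ S` has at least `#S` elements. Its complement `T = B \ N` satisfies `S * T ⊆ B`, and
since `1 ∉ B`, `1 = 1 * 1` is the only representation of `1` in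
`(S ∪ {1}) * (T ∪ {1}) ⊆ B ∪ {1}`. Kemperman's theorem `#X + #Y ≤ #(X * Y) + 1` for such pairs
then gives `#S + #T ≤ #B`.
-/

open MulOpposite
open scoped Pointwise

namespace Finset

lemma exists_bijOn_of_forall_card_le_card_biUnion {α : Type*} [DecidableEq α] {B : Finset α}
    (t : α → Finset α) (ht : ∀ a ∈ B, t a ⊆ B) (hall : ∀ S ⊆ B, #S ≤ #(S.biUnion t)) :
    ∃ f : α → α, Set.BijOn f B B ∧ ∀ a ∈ B, f a ∈ t a := by
  obtain ⟨f, hf, hft⟩ := (all_card_le_biUnion_card_iff_exists_injective fun a : B ↦ t a).1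
    fun s ↦ by
      simpa [image_biUnion, card_image_of_injective _ Subtype.val_injective] using
        hall (s.image Subtype.val) fun _ hx ↦ by obtain ⟨a, -, rfl⟩ := mem_image.1 hx; exact a.2
  let F : α → α := fun x ↦ if hx : x ∈ B then f ⟨x, hx⟩ else x
  have hF : ∀ a (ha : a ∈ B), F a = f ⟨a, ha⟩ := fun a ha ↦ dif_pos ha
  have hmaps : Set.MapsTo F B B := fun a ha ↦ by rw [hF a ha]; exact ht a ha (hft _)
  refine ⟨F, (B.finite_toSet.injOn_iff_bijOn_of_mapsTo hmaps).1 ?_, fun a ha ↦ hF a ha ▸ hft _⟩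
  intro a ha b hb hab
  rw [hF a ha, hF b hb] at hab
  exact congrArg Subtype.val (hf hab)

variable {G : Type*} [Group G] [DecidableEq G] {A B : Finset G} {g : G}

lemma uniqueMul_one_mulETransformLeft_inv (h : UniqueMul A B 1 1) (hg : g⁻¹ ∉ A) :
    UniqueMul (mulETransformLeft g⁻¹ (A, B)).1 (mulETransformLeft g⁻¹ (A, B)).2 1 1 := by
  intro a b ha hb hab
  simp only [mulETransformLeft_fst, mulETransformLeft_snd, inv_inv, mem_union, mem_inter,
    mem_smul_finset, op_smul_eq_mul, smul_eq_mul] at ha hb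
  obtain ⟨haA, a', ha', rfl⟩ := ha
  rcases hb with hb | ⟨b', hb', rfl⟩
  · exact h haA hb hab
  obtain ⟨rfl, -⟩ := h ha' hb' (by simpa [mul_assoc] using hab)
  exact absurd (by simpa using haA) hg

lemma uniqueMul_one_mulETransformRight (h : UniqueMul A B 1 1) (hg : g⁻¹ ∉ B) :
    UniqueMul (mulETransformRight g (A, B)).1 (mulETransformRight g (A, B)).2 1 1 := by
  intro a b ha hb hab
  simp only [mulETransformRight_fst, mulETransformRight_snd, mem_union, mem_inter,
    mem_smul_finset, op_smul_eq_mul, smul_eq_mul] at ha hb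
  obtain ⟨hbB, b', hb', rfl⟩ := hb
  rcases ha with ha | ⟨a', ha', rfl⟩
  · exact h ha hbB hab
  obtain ⟨-, rfl⟩ := h ha' hb' (by simpa [mul_assoc] using hab)
  exact absurd (by simpa using hbB) hg

lemma mem_of_one_mem_of_subset_op_smul_finset (h1 : 1 ∈ A) (h : A ⊆ op g • A) : g ∈ A := by
  rw [eq_of_subset_of_card_le h (card_smul_finset _ _).le]
  exact mem_smul_finset.2 ⟨1, h1, by simp⟩

lemma card_mulETransformLeft_inv_fst (x : Finset G × Finset G) :
    #(mulETransformLeft g⁻¹ x).1 = #(mulETransformLeft g x).1 := by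
  rw [← card_smul_finset (op g), mulETransformLeft_fst, mulETransformLeft_fst, smul_finset_inter,
    op_inv, smul_inv_smul, inter_comm]

lemma card_mulETransformLeft_inv_snd (x : Finset G × Finset G) :
    #(mulETransformLeft g⁻¹ x).2 = #(mulETransformLeft g x).2 := by
  rw [← card_smul_finset g⁻¹, mulETransformLeft_snd, mulETransformLeft_snd, smul_finset_union,
    inv_inv, inv_smul_smul, union_comm]

lemma card_add_card_le_card_mul_add_one_of_inter_eq (hA : 1 ∈ A) (hB : 1 ∈ B)
    (h : A ∩ B = {1}) : #A + #B ≤ #(A * B) + 1 :=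
  calc #A + #B = #(A ∪ B) + 1 := by rw [← card_union_add_card_inter, h, card_singleton]
    _ ≤ #(A * B) + 1 := by grw [union_subset (subset_mul_left A hB) (subset_mul_right B hA)]

theorem card_add_card_le_card_mul_add_one (hA : 1 ∈ A) (hB : 1 ∈ B)
    (h : UniqueMul A B 1 1) : #A + #B ≤ #(A * B) + 1 := by
  induction hm : toLex (2 * #(A * B) - (#A + #B), #A) using WellFoundedLT.induction
    generalizing A B with | ind m ih => ?_
  subst hm
  have hAB : #A ≤ #(A * B) := card_le_card (subset_mul_left A hB)
  have hBAB : #B ≤ #(A * B) := card_le_card (subset_mul_right B hA)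
  by_cases htriv : A ∩ B = {1}
  · exact card_add_card_le_card_mul_add_one_of_inter_eq hA hB htriv
  obtain ⟨g, hgAB, hg⟩ : ∃ g ∈ A ∩ B, g ≠ 1 := by
    by_contra! hne
    exact htriv (eq_singleton_iff_unique_mem.2 ⟨mem_inter.2 ⟨hA, hB⟩, hne⟩)
  obtain ⟨hgA, hgB⟩ := mem_inter.1 hgAB
  have hgA_inv : g⁻¹ ∉ A := fun hg' ↦ hg (inv_eq_one.1 (h hg' hgB (by simp)).1)
  have hgB_inv : g⁻¹ ∉ B := fun hg' ↦ hg (h hgA hg' (by simp)).1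
  -- Transforming by `g⁻¹` on the left and by `g` on the right keeps `1` in all four sets. The two
  -- transforms have total size `2 * (#A + #B)` and do not enlarge `A * B`, so one of them either
  -- keeps `#A + #B` while shrinking `A`, or increases `#A + #B`.
  have hLAB := card_le_card (mulETransformLeft.fst_mul_snd_subset g⁻¹ (A, B))
  have hRAB := card_le_card (mulETransformRight.fst_mul_snd_subset g (A, B))
  have hLR := MulETransform.card g (A, B)
  rw [← card_mulETransformLeft_inv_fst, ← card_mulETransformLeft_inv_snd] at hLR
  have hLA : #(mulETransformLeft g⁻¹ (A, B)).1 < #A :=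
    card_lt_card <| ssubset_iff_subset_ne.2 ⟨inter_subset_left, fun he ↦ hgA_inv <|
      mem_of_one_mem_of_subset_op_smul_finset hA (he.symm.subset.trans inter_subset_right)⟩
  dsimp only at hLAB hRAB hLR
  generalize hL : mulETransformLeft g⁻¹ (A, B) = L at hLAB hLR hLA
  generalize hR : mulETransformRight g (A, B) = R at hRAB hLR
  have hL1 : 1 ∈ L.1 := hL ▸ mem_inter.2 ⟨hA, mem_smul_finset.2 ⟨g, hgA, by simp⟩⟩
  have hL2 : 1 ∈ L.2 := by simp [← hL, hB]
  have hR1 : 1 ∈ R.1 := by simp [← hR, hA]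
  have hR2 : 1 ∈ R.2 := hR ▸ mem_inter.2 ⟨hB, mem_smul_finset.2 ⟨g, hgB, by simp⟩⟩
  have hR1R := card_le_card (subset_mul_left R.1 hR2)
  have hR2R := card_le_card (subset_mul_right R.2 hR1)
  rcases le_or_lt_of_add_le_add hLR.ge with hsum | hsum
  · have := ih _ (Prod.Lex.toLex_lt_toLex.2 (by omega)) hL1 hL2
      (hL ▸ uniqueMul_one_mulETransformLeft_inv h hgA_inv) rfl
    omega
  · have := ih _ (Prod.Lex.toLex_lt_toLex.2 (by omega)) hR1 hR2
      (hR ▸ uniqueMul_one_mulETransformRight h hgB_inv) rfl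
    omega

lemma card_add_card_le_of_mul_subset {S T : Finset G} (h1 : 1 ∉ B) (hS : S ⊆ B) (hT : T ⊆ B)
    (hST : S * T ⊆ B) : #S + #T ≤ #B := by
  have h1S : 1 ∉ S := fun h ↦ h1 (hS h)
  have h1T : 1 ∉ T := fun h ↦ h1 (hT h)
  have hunique : UniqueMul (insert 1 S) (insert 1 T) 1 1 := by
    intro a b ha hb hab
    rcases mem_insert.1 ha with rfl | ha <;> rcases mem_insert.1 hb with rfl | hb
    · simp
    · simp_all
    · simp_all
    · exact absurd (by simpa [hab] using hST (mul_mem_mul ha hb)) h1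
  have hprod : insert 1 S * insert 1 T ⊆ insert 1 B := by
    intro x hx
    obtain ⟨a, ha, b, hb, rfl⟩ := mem_mul.1 hx
    rcases mem_insert.1 ha with rfl | ha <;> rcases mem_insert.1 hb with rfl | hb
    · simp
    · simpa using mem_insert_of_mem (hT hb)
    · simpa using mem_insert_of_mem (hS ha)
    · exact mem_insert_of_mem (hST (mul_mem_mul ha hb))
  have := card_add_card_le_card_mul_add_one (mem_insert_self 1 S) (mem_insert_self 1 T)
    hunique
  grw [hprod, card_insert_of_notMem h1S, card_insert_of_notMem h1T,
    card_insert_of_notMem h1] at this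
  omega

lemma card_le_card_biUnion_filter_mul_notMem {S : Finset G} (h1 : 1 ∉ B) (hS : S ⊆ B) :
    #S ≤ #(S.biUnion fun a ↦ B.filter (a * · ∉ B)) := by
  set N := S.biUnion fun a ↦ B.filter (a * · ∉ B)
  have hNB : N ⊆ B := biUnion_subset.2 fun _ _ ↦ filter_subset _ _
  have hSN : S * (B \ N) ⊆ B := by
    intro x hx
    obtain ⟨a, ha, c, hc, rfl⟩ := mem_mul.1 hx
    by_contra hac
    exact (mem_sdiff.1 hc).2 (mem_biUnion.2 ⟨a, ha, mem_filter.2 ⟨(mem_sdiff.1 hc).1, hac⟩⟩)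
  have := card_add_card_le_of_mul_subset h1 hS sdiff_subset hSN
  rw [card_sdiff_of_subset hNB] at this
  have := card_le_card hNB
  omega

end Finset

open Finset

theorem automatching_iff_general {G : Type*} [Group G] (B : Finset G) :
    (∃ f : G → G, IsGroupMatching B B f) ↔ (1 : G) ∉ B := by
  classical
  refine ⟨fun ⟨f, hbij, hf⟩ h1 ↦ hf 1 h1 (by simpa using hbij.mapsTo h1), fun h1 ↦ ?_⟩
  obtain ⟨f, hbij, hf⟩ := exists_bijOn_of_forall_card_le_card_biUnion
    (fun a ↦ B.filter (a * · ∉ B)) (fun _ _ ↦ filter_subset _ _)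
    fun _ hS ↦ card_le_card_biUnion_filter_mul_notMem h1 hS
  exact ⟨f, hbij, fun a ha ↦ (mem_filter.1 (hf a ha)).2⟩

/-- For a nonempty finite subset `B` of a group `G`, there is a matching from `B`
to itself iff `1 ∉ B`. -/
theorem automatching_iff {G : Type*} [Group G] (B : Finset G) (hB : B.Nonempty) :
    (∃ f : G → G, IsGroupMatching B B f) ↔ (1 : G) ∉ B :=
  automatching_iff_general B
end

section
/- Let A, B be n-dimensional K-subspaces of L and let 𝒜 = {a₁,…,aₙ} be a basis of A. Then 𝒜 can be matched to some basis of B if and only if for every subset J ⊆ {1,…,n} one has dim_K ⋂_{i∈J} (a_i⁻¹A ∩ B) ≤ n − |J|. -/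
/-!
Dualising turns the problem into Rado's theorem for vector spaces. With `Vᵢ = aᵢ⁻¹A ∩ B`, a basis
`b` of `B` is matched to `a` exactly when each coordinate functional `b.coord i` annihilates `Vᵢ`,
so matchable bases correspond to linearly independent transversals of the annihilators `Vᵢ^⊥`;
since `∑_{i ∈ J} Vᵢ^⊥ = (⋂_{i ∈ J} Vᵢ)^⊥` has dimension `n - dim ⋂_{i ∈ J} Vᵢ`, the dimension
condition is Hall's condition `|J| ≤ dim ∑_{i ∈ J} Vᵢ^⊥`.

Rado's theorem (Hall's condition suffices) goes by induction on `∑ᵢ dim Uᵢ`. When every `Uᵢ` is a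
line, Hall's condition for all indices says that spanning vectors are independent. Otherwise
write some `U_{i₀}` of dimension at least two as `H₀ + H₁` with both summands proper. If replacing
`U_{i₀}` by `H₀` and by `H₁` both broke Hall's condition, at sets `J₀, J₁ ∌ i₀`, then submodularity
of dimension for `X = H₀ + ∑_{J₀} U` and `Y = H₁ + ∑_{J₁} U` would violate it for `U` at
`J₀ ∪ J₁ ∪ {i₀}` or at `J₀ ∩ J₁`.
-/

/-- The family `a : Fin n → L` is a basis of the `K`-subspace `A` of `L`. -/
def IsLinBasis (K : Type*) {L : Type*} [Field K] [DivisionRing L] [Algebra K L]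
    {n : ℕ} (a : Fin n → L) (A : Submodule K L) : Prop :=
  LinearIndependent K a ∧ Submodule.span K (Set.range a) = A

/-- The basis `a` of `A` is matched to the basis `b` of `B`: for every `i` and every
`x ∈ B`, if `a i * x ∈ A` then `x` lies in the span of `{b j : j ≠ i}`. -/
def MatchedBases (K : Type*) {L : Type*} [Field K] [DivisionRing L] [Algebra K L]
    {n : ℕ} (a b : Fin n → L) (A B : Submodule K L) : Prop :=
  ∀ i : Fin n, ∀ x ∈ B, a i * x ∈ A → x ∈ Submodule.span K (b '' {j | j ≠ i})

open Module Submodule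

section Hall

variable {K W ι : Type*} [Field K] [AddCommGroup W] [Module K W]

def HallCondition (U : ι → Submodule K W) : Prop :=
  ∀ J : Finset ι, J.card ≤ finrank K ↥(⨆ i ∈ J, U i)

theorem HallCondition.of_linearIndependent [FiniteDimensional K W] {U : ι → Submodule K W}
    {f : ι → W} (hf : LinearIndependent K f) (hfU : ∀ i, f i ∈ U i) : HallCondition U := by
  intro J
  calc J.card = finrank K (span K (Set.range (f ∘ ((↑) : J → ι)))) := by
        rw [finrank_span_eq_card (hf.comp _ Subtype.val_injective), Fintype.card_coe]
    _ ≤ finrank K ↥(⨆ i ∈ J, U i) := by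
        refine Submodule.finrank_mono (span_le.mpr ?_)
        rintro _ ⟨i, rfl⟩
        exact le_iSup₂ (f := fun i (_ : i ∈ J) => U i) i i.2 (hfU i)

theorem HallCondition.exists_linearIndependent_of_finrank_le_one [Fintype ι]
    {U : ι → Submodule K W} (hU : HallCondition U) (hU₁ : ∀ i, finrank K (U i) ≤ 1) :
    ∃ f : ι → W, LinearIndependent K f ∧ ∀ i, f i ∈ U i := by
  have hline : ∀ i, ∃ v ∈ U i, U i = K ∙ v := by
    intro i
    have hrank : finrank K (U i) = 1 := by
      have := hU {i}
      rw [Finset.iSup_singleton] at this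
      exact le_antisymm (hU₁ i) (by simpa using this)
    obtain ⟨v, hv, hv0⟩ := exists_mem_ne_zero_of_ne_bot (p := U i) fun h => by
      rw [h, finrank_bot] at hrank; exact zero_ne_one hrank
    exact ⟨v, hv, eq_span_singleton_of_mem_of_finrank_eq_one hrank hv hv0⟩
  choose v hvU hUv using hline
  refine ⟨v, linearIndependent_iff_card_le_finrank_span.mpr ?_, hvU⟩
  have hspan : span K (Set.range v) = ⨆ i, U i := by
    rw [span_range_eq_iSup]; exact iSup_congr fun i => (hUv i).symm
  have huniv : (⨆ i ∈ Finset.univ, U i) = ⨆ i, U i := by simp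
  have := hU Finset.univ
  rwa [huniv, ← hspan, Finset.card_univ] at this

theorem Submodule.exists_lt_lt_sup_eq_of_two_le_finrank {U : Submodule K W} (hU : 2 ≤ finrank K U) :
    ∃ H₀ H₁, H₀ < U ∧ H₁ < U ∧ H₀ ⊔ H₁ = U := by
  obtain ⟨v, hv, hv0⟩ := exists_mem_ne_zero_of_ne_bot (p := U) fun h => by
    rw [h, finrank_bot] at hU; omega
  obtain ⟨Q, hQ⟩ := (K ∙ v).exists_isCompl
  have hvU : K ∙ v ≤ U := (span_singleton_le_iff_mem v U).mpr hv
  refine ⟨K ∙ v, U ⊓ Q, lt_of_le_of_ne hvU fun h => ?_, inf_le_left.lt_of_ne fun h => ?_, ?_⟩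
  · have := finrank_span_singleton (K := K) hv0
    rw [h] at this; omega
  · have hvQ : K ∙ v ≤ Q := hvU.trans (inf_eq_left.mp h)
    exact hv0 ((span_singleton_eq_bot (R := K)).mp (hQ.disjoint.eq_bot_of_le hvQ))
  · rw [inf_comm, ← sup_inf_assoc_of_le Q hvU, hQ.sup_eq_top, top_inf_eq]

theorem HallCondition.update [DecidableEq ι] {U : ι → Submodule K W} (hU : HallCondition U)
    {i₀ : ι} {H : Submodule K W}
    (hH : ∀ J : Finset ι, i₀ ∉ J → J.card < finrank K ↥(H ⊔ ⨆ i ∈ J, U i)) :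
    HallCondition (Function.update U i₀ H) := by
  intro J
  by_cases hi₀ : i₀ ∈ J
  · have hJ := Finset.insert_erase hi₀
    have hi₀' := Finset.notMem_erase i₀ J
    rw [← hJ, Finset.iSup_insert_update U hi₀', Finset.card_insert_of_notMem hi₀']
    exact hH _ hi₀'
  · have hagree : (⨆ i ∈ J, Function.update U i₀ H i) = ⨆ i ∈ J, U i :=
      biSup_congr fun i hi => Function.update_of_ne (ne_of_mem_of_not_mem hi hi₀) _ _
    rw [hagree]
    exact hU J

theorem HallCondition.update_or_update [DecidableEq ι] [FiniteDimensional K W]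
    {U : ι → Submodule K W} (hU : HallCondition U) {i₀ : ι} {H₀ H₁ : Submodule K W}
    (hsup : H₀ ⊔ H₁ = U i₀) :
    HallCondition (Function.update U i₀ H₀) ∨ HallCondition (Function.update U i₀ H₁) := by
  refine or_iff_not_imp_left.mpr fun h₀ => hU.update fun J₁ hJ₁ => ?_
  obtain ⟨J₀, hJ₀, hX⟩ : ∃ J₀ : Finset ι, i₀ ∉ J₀ ∧
      finrank K ↥(H₀ ⊔ ⨆ i ∈ J₀, U i) ≤ J₀.card := by
    simpa using mt hU.update h₀
  by_contra! hY
  set X := H₀ ⊔ ⨆ i ∈ J₀, U i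
  set Y := H₁ ⊔ ⨆ i ∈ J₁, U i
  have hsupXY : X ⊔ Y = ⨆ i ∈ insert i₀ (J₀ ∪ J₁), U i := by
    rw [Finset.iSup_insert, Finset.iSup_union, ← hsup, sup_sup_sup_comm]
  have hinfXY : (⨆ i ∈ J₀ ∩ J₁, U i) ≤ X ⊓ Y :=
    le_inf (le_sup_of_le_right (biSup_mono fun i hi => (Finset.mem_inter.mp hi).1))
      (le_sup_of_le_right (biSup_mono fun i hi => (Finset.mem_inter.mp hi).2))
  have hunion := hU (insert i₀ (J₀ ∪ J₁))
  rw [← hsupXY, Finset.card_insert_of_notMem (by simp [hJ₀, hJ₁])] at hunion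
  have hinter := (hU (J₀ ∩ J₁)).trans (Submodule.finrank_mono hinfXY)
  have := Submodule.finrank_sup_add_finrank_inf_eq X Y
  have := Finset.card_union_add_card_inter J₀ J₁
  omega

theorem HallCondition.exists_linearIndependent [Fintype ι] [FiniteDimensional K W]
    {U : ι → Submodule K W} (hU : HallCondition U) :
    ∃ f : ι → W, LinearIndependent K f ∧ ∀ i, f i ∈ U i := by
  classical
  induction h : ∑ i, finrank K (U i) using Nat.strong_induction_on generalizing U with
  | _ m ih =>
  by_cases hU₁ : ∀ i, finrank K (U i) ≤ 1
  · exact hU.exists_linearIndependent_of_finrank_le_one hU₁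
  obtain ⟨i₀, hi₀⟩ := not_forall.mp hU₁
  obtain ⟨H₀, H₁, hH₀, hH₁, hsup⟩ :=
    Submodule.exists_lt_lt_sup_eq_of_two_le_finrank (not_le.mp hi₀ : 2 ≤ finrank K (U i₀))
  have hshrink : ∀ H < U i₀, HallCondition (Function.update U i₀ H) →
      ∃ f : ι → W, LinearIndependent K f ∧ ∀ i, f i ∈ U i := by
    intro H hH hUH
    have hle : ∀ i, Function.update U i₀ H i ≤ U i := by
      intro i
      rcases eq_or_ne i i₀ with rfl | hi
      · simpa using hH.le
      · simp [hi]
    have hsum : ∑ i, finrank K (Function.update U i₀ H i) < m := h ▸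
      Finset.sum_lt_sum (fun i _ => Submodule.finrank_mono (hle i))
        ⟨i₀, Finset.mem_univ _, by
          rw [Function.update_self]; exact Submodule.finrank_lt_finrank_of_lt hH⟩
    obtain ⟨f, hf, hfU⟩ := ih _ hsum hUH rfl
    exact ⟨f, hf, fun i => hle i (hfU i)⟩
  rcases hU.update_or_update hsup with h₀ | h₁
  exacts [hshrink H₀ hH₀ h₀, hshrink H₁ hH₁ h₁]

theorem hallCondition_iff_exists_linearIndependent [Fintype ι] [FiniteDimensional K W]
    (U : ι → Submodule K W) :
    HallCondition U ↔ ∃ f : ι → W, LinearIndependent K f ∧ ∀ i, f i ∈ U i :=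
  ⟨HallCondition.exists_linearIndependent, fun ⟨_, hf, hfU⟩ => .of_linearIndependent hf hfU⟩

end Hall

theorem Module.Basis.le_span_image_ne_iff {R M ι : Type*} [CommSemiring R] [AddCommMonoid M]
    [Module R M] (b : Basis ι R M) {i : ι} {V : Submodule R M} :
    V ≤ span R (b '' {j | j ≠ i}) ↔ b.coord i ∈ V.dualAnnihilator := by
  simp only [SetLike.le_def, Basis.mem_span_image, mem_dualAnnihilator, Basis.coord_apply]
  refine forall₂_congr fun x _ => ?_
  simp [Set.subset_def, not_imp_not]

theorem Module.Basis.exists_coord_eq {K W ι : Type*} [Field K] [AddCommGroup W] [Module K W]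
    [FiniteDimensional K W] (F : Basis ι K (Dual K W)) : ∃ b : Basis ι K W, b.coord = ⇑F := by
  classical
  have : Finite ι := Module.Finite.finite_basis F
  exact ⟨F.dualBasis.map (evalEquiv K W).symm, by ext i x; simp⟩

section Duality

variable {K W ι : Type*} [Field K] [AddCommGroup W] [Module K W] [FiniteDimensional K W]

theorem hallCondition_dualAnnihilator_iff (V : ι → Submodule K W) :
    HallCondition (fun i => (V i).dualAnnihilator) ↔
      ∀ J : Finset ι, finrank K ↥(⨅ i ∈ J, V i) + J.card ≤ finrank K W := by
  refine forall_congr' fun J => ?_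
  have hann : (⨆ i ∈ J, (V i).dualAnnihilator) = (⨅ i ∈ J, V i).dualAnnihilator := by
    rw [iInf_subtype', Subspace.dualAnnihilator_iInf_eq, iSup_subtype']
  have := Subspace.finrank_add_finrank_dualAnnihilator_eq (⨅ i ∈ J, V i)
  rw [hann]
  omega

theorem exists_basis_le_span_ne_iff_exists_linearIndependent [Fintype ι]
    (hW : finrank K W = Fintype.card ι) (V : ι → Submodule K W) :
    (∃ b : Basis ι K W, ∀ i, V i ≤ span K (b '' {j | j ≠ i})) ↔
      ∃ f : ι → Dual K W, LinearIndependent K f ∧ ∀ i, f i ∈ (V i).dualAnnihilator := by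
  simp only [Basis.le_span_image_ne_iff]
  constructor
  · rintro ⟨b, hb⟩
    classical
    exact ⟨b.coord, b.coe_dualBasis ▸ b.dualBasis.linearIndependent, hb⟩
  · rintro ⟨f, hf, hfV⟩
    have hcard : Fintype.card ι = finrank K (Dual K W) := by rw [Subspace.dual_finrank_eq, hW]
    obtain ⟨b, hb⟩ := (basisOfLinearIndependentOfCardEqFinrank' f hf hcard).exists_coord_eq
    exact ⟨b, by simpa [hb] using hfV⟩

theorem exists_basis_le_span_ne_iff_finrank_iInf [Fintype ι]
    (hW : finrank K W = Fintype.card ι) (V : ι → Submodule K W) :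
    (∃ b : Basis ι K W, ∀ i, V i ≤ span K (b '' {j | j ≠ i})) ↔
      ∀ J : Finset ι, finrank K ↥(⨅ i ∈ J, V i) + J.card ≤ finrank K W := by
  rw [exists_basis_le_span_ne_iff_exists_linearIndependent hW,
    ← hallCondition_iff_exists_linearIndependent, hallCondition_dualAnnihilator_iff]

end Duality

section Subspace

variable {R M ι : Type*} [Ring R] [AddCommGroup M] [Module R M] (B : Submodule R M)

theorem Submodule.exists_linearIndependent_span_eq_and_iff (P : (ι → M) → Prop) :
    (∃ b : ι → M, (LinearIndependent R b ∧ span R (Set.range b) = B) ∧ P b) ↔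
      ∃ b : Basis ι R B, P fun i => b i := by
  constructor
  · rintro ⟨b, ⟨hb, rfl⟩, hP⟩
    exact ⟨Basis.span hb, by simpa using hP⟩
  · rintro ⟨b, hP⟩
    refine ⟨_, ⟨b.linearIndependent.map' B.subtype B.ker_subtype, ?_⟩, hP⟩
    rw [Set.range_comp, ← map_span, b.span_eq, map_top, range_subtype]

theorem Submodule.coe_mem_span_image_iff (b : ι → B) (s : Set ι) (y : B) :
    (y : M) ∈ span R ((fun i => (b i : M)) '' s) ↔ y ∈ span R (b '' s) := by
  rw [← Set.image_image]
  exact apply_mem_span_image_iff_mem_span (f := B.subtype) Subtype.val_injective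

theorem Submodule.finrank_inf_eq_finrank_comap_subtype (C : Submodule R M) :
    finrank R ↥(B ⊓ C) = finrank R ↥(C.comap B.subtype) := by
  rw [← (comapSubtypeEquivOfLe (inf_le_left : B ⊓ C ≤ B)).finrank_eq, comap_inf,
    comap_subtype_self, top_inf_eq]

end Subspace

theorem matchable_iff_dim_general {K L : Type*} [Field K] [DivisionRing L] [Algebra K L]
    {n : ℕ} (A B : Submodule K L) [FiniteDimensional K B]
    (hB : Module.finrank K B = n) (a : Fin n → L) :
    (∃ b : Fin n → L, IsLinBasis K b B ∧ MatchedBases K a b A B) ↔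
      ∀ J : Finset (Fin n),
        Module.finrank K
          ↥(B ⊓ ⨅ i ∈ J, A.comap (LinearMap.mulLeft K (a i))) ≤ n - J.card := by
  set V : Fin n → Submodule K B := fun i => (A.comap (LinearMap.mulLeft K (a i))).comap B.subtype
  have hmatched (b : Basis (Fin n) K B) :
      MatchedBases K a (fun i => b i) A B ↔ ∀ i, V i ≤ span K (b '' {j | j ≠ i}) :=
    forall_congr' fun i => ⟨fun h y hy => (B.coe_mem_span_image_iff b _ y).mp (h y y.2 hy),
      fun h x hx hax => (B.coe_mem_span_image_iff b _ ⟨x, hx⟩).mpr (h hax)⟩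
  have hdim (J : Finset (Fin n)) : finrank K ↥(B ⊓ ⨅ i ∈ J, A.comap (LinearMap.mulLeft K (a i))) =
      finrank K ↥(⨅ i ∈ J, V i) := by
    have hcomap :
        (⨅ i ∈ J, A.comap (LinearMap.mulLeft K (a i))).comap B.subtype = ⨅ i ∈ J, V i := by
      simp only [V, comap_iInf]
    rw [B.finrank_inf_eq_finrank_comap_subtype, hcomap]
  calc _ ↔ ∃ b : Basis (Fin n) K B, ∀ i, V i ≤ span K (b '' {j | j ≠ i}) := by
          simp only [IsLinBasis, ← hmatched]
          exact B.exists_linearIndependent_span_eq_and_iff _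
    _ ↔ ∀ J : Finset (Fin n), finrank K ↥(⨅ i ∈ J, V i) + J.card ≤ finrank K B :=
          exists_basis_le_span_ne_iff_finrank_iInf (by rw [hB, Fintype.card_fin]) V
    _ ↔ _ := forall_congr' fun J => by
          have hJ : J.card ≤ n := by simpa using J.card_le_univ
          rw [hdim, hB]
          omega

/-- A basis `a` of the `n`-dimensional subspace `A` can be matched to some basis of the
`n`-dimensional subspace `B` iff for every `J ⊆ {1,…,n}` one has
`dim ⋂_{i ∈ J} (aᵢ⁻¹A ∩ B) ≤ n - |J|`, where `aᵢ⁻¹A ∩ B = {x ∈ B : aᵢ x ∈ A}`. -/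
theorem matchable_iff_dim {K L : Type*} [Field K] [DivisionRing L] [Algebra K L]
    {n : ℕ} (A B : Submodule K L) [FiniteDimensional K B]
    (hB : Module.finrank K B = n) (a : Fin n → L) (hA : IsLinBasis K a A) :
    (∃ b : Fin n → L, IsLinBasis K b B ∧ MatchedBases K a b A B) ↔
      ∀ J : Finset (Fin n),
        Module.finrank K
          ↥(B ⊓ ⨅ i ∈ J, A.comap (LinearMap.mulLeft K (a i))) ≤ n - J.card :=
  matchable_iff_dim_general A B hB a
end

section
/- Let F be a finite set, let F₁,…,Fₙ be subsets of F, and let M be a matroid on F with rank function r. Then there exists a transversal of the family {F₁,…,Fₙ} that is an independent set of M (i.e., an injective choice function i ↦ x_i with x_i ∈ F_i for all i and {x₁,…,xₙ} independent in M) if and only if r(⋃_{i∈J} F_i) ≥ |J| for every subset J ⊆ {1,…,n}. -/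
/-!
Necessity: on the indices in `J` an independent transversal is an independent `|J|`-subset of
`⋃ i ∈ J, F i`.

Sufficiency is Rado's argument, by induction on `∑ i, |F i|`. When every `F i` is a singleton
`{x i}`, the condition for `J = univ` forces the `x i` to be distinct and independent. Otherwise
some `F k` contains `a ≠ b`, and deleting `a` or deleting `b` from `F k` preserves the condition:
if `J₁` fails after deleting `a` and `J₂` fails after deleting `b`, then `k ∈ J₁ ∩ J₂`, the union
of the shrunk families over `J₁` and over `J₂` covers `⋃ i ∈ J₁ ∪ J₂, F i`, their intersection
covers `⋃ i ∈ (J₁ ∩ J₂) \ {k}, F i`, and submodularity of the rank gives a contradiction.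
-/

/-- The rank function of a matroid `M`: the rank of a set `S` is the maximal size of an
independent subset of `S`. -/
noncomputable def matroidRank {α : Type*} (M : Matroid α) (S : Set α) : ℕ :=
  sSup (Set.ncard '' {I : Set α | I ⊆ S ∧ M.Indep I})

open Set Function

theorem Set.biUnion_update_of_notMem {α ι : Type*} [DecidableEq ι] (F : ι → Set α) {k : ι}
    (s : Set α) {J : Finset ι} (hk : k ∉ J) : ⋃ i ∈ J, update F k s i = ⋃ i ∈ J, F i :=
  iUnion₂_congr fun _ hi ↦ update_of_ne (ne_of_mem_of_not_mem hi hk) _ _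

namespace Matroid

variable {α ι : Type*} {M : Matroid α}

section Rank

variable [Finite α] {S T I : Set α}

theorem matroidRank_eq_eRk (M : Matroid α) (S : Set α) : (matroidRank M S : ℕ∞) = M.eRk S := by
  obtain ⟨B, hB⟩ := M.exists_isBasis' S
  have hmax : IsGreatest (ncard '' {I | I ⊆ S ∧ M.Indep I}) B.ncard := by
    refine ⟨⟨B, ⟨hB.subset, hB.indep⟩, rfl⟩, ?_⟩
    rintro _ ⟨I, ⟨hIS, hI⟩, rfl⟩
    have := hI.encard_le_eRk_of_subset hIS
    rwa [← hB.encard_eq_eRk, ← I.toFinite.cast_ncard_eq, ← B.toFinite.cast_ncard_eq,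
      Nat.cast_le] at this
  rw [matroidRank, hmax.csSup_eq, ← hB.encard_eq_eRk, B.toFinite.cast_ncard_eq]

theorem matroidRank_mono (h : S ⊆ T) : matroidRank M S ≤ matroidRank M T := by
  have := M.eRk_mono h
  rwa [← matroidRank_eq_eRk, ← matroidRank_eq_eRk, Nat.cast_le] at this

theorem matroidRank_le_ncard (M : Matroid α) (S : Set α) : matroidRank M S ≤ S.ncard := by
  have := M.eRk_le_encard S
  rwa [← matroidRank_eq_eRk, ← S.toFinite.cast_ncard_eq, Nat.cast_le] at this

theorem Indep.ncard_le_matroidRank (hI : M.Indep I) (hIS : I ⊆ S) :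
    I.ncard ≤ matroidRank M S := by
  have := hI.encard_le_eRk_of_subset hIS
  rwa [← matroidRank_eq_eRk, ← I.toFinite.cast_ncard_eq, Nat.cast_le] at this

theorem indep_of_ncard_le_matroidRank (h : S.ncard ≤ matroidRank M S) : M.Indep S := by
  rw [indep_iff_eRk_eq_encard_of_finite S.toFinite, ← matroidRank_eq_eRk,
    ← S.toFinite.cast_ncard_eq, Nat.cast_inj]
  exact le_antisymm (matroidRank_le_ncard M S) h

theorem matroidRank_inter_add_matroidRank_union_le (M : Matroid α) (S T : Set α) :
    matroidRank M (S ∩ T) + matroidRank M (S ∪ T) ≤ matroidRank M S + matroidRank M T := by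
  have := M.eRk_inter_add_eRk_union_le S T
  simp only [← matroidRank_eq_eRk] at this
  exact_mod_cast this

end Rank

def RadoCondition (M : Matroid α) (F : ι → Set α) : Prop :=
  ∀ J : Finset ι, J.card ≤ matroidRank M (⋃ i ∈ J, F i)

theorem RadoCondition.mem_of_update_lt [DecidableEq ι] {F : ι → Set α}
    (h : M.RadoCondition F) {k : ι} {s : Set α} {J : Finset ι}
    (hJ : matroidRank M (⋃ i ∈ J, update F k s i) < J.card) : k ∈ J := by
  by_contra hk
  rw [biUnion_update_of_notMem F s hk] at hJ
  exact (h J).not_gt hJ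

variable [Finite α]

theorem radoCondition_of_indep_transversal {F : ι → Set α} {x : ι → α} (hx : Injective x)
    (hxF : ∀ i, x i ∈ F i) (hind : M.Indep (range x)) : M.RadoCondition F := by
  intro J
  have hsub : x '' J ⊆ ⋃ i ∈ J, F i := by
    rintro _ ⟨i, hi, rfl⟩
    exact mem_biUnion hi (hxF i)
  simpa [ncard_image_of_injective _ hx] using
    (hind.subset (image_subset_range x J)).ncard_le_matroidRank hsub

theorem RadoCondition.nonempty {F : ι → Set α} (h : M.RadoCondition F) (i : ι) :
    (F i).Nonempty := by
  have := (h {i}).trans (matroidRank_le_ncard M _)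
  simp only [Finset.card_singleton, Finset.mem_singleton, iUnion_iUnion_eq_left] at this
  exact nonempty_of_ncard_ne_zero (by omega)

theorem RadoCondition.indep_transversal_of_singleton [Fintype ι] {x : ι → α}
    (h : M.RadoCondition fun i ↦ {x i}) : Injective x ∧ M.Indep (range x) := by
  have hrank := h Finset.univ
  simp only [Finset.card_univ, Finset.mem_univ, iUnion_true, iUnion_singleton_eq_range] at hrank
  have hcard : (range x).ncard ≤ Fintype.card ι := by
    simpa [← image_univ, Nat.card_eq_fintype_card] using ncard_image_le (s := univ) (f := x)
  refine ⟨injOn_univ.mp (injOn_of_ncard_image_eq ?_), indep_of_ncard_le_matroidRank ?_⟩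
  · rw [image_univ, ncard_univ, Nat.card_eq_fintype_card]
    exact le_antisymm hcard (hrank.trans (matroidRank_le_ncard M _))
  · exact hcard.trans hrank

theorem RadoCondition.update_diff_singleton [DecidableEq ι] {F : ι → Set α}
    (h : M.RadoCondition F) (k : ι) {a b : α} (hab : a ≠ b) :
    M.RadoCondition (update F k (F k \ {a})) ∨ M.RadoCondition (update F k (F k \ {b})) := by
  by_contra! hfail
  simp only [RadoCondition, not_forall, not_le] at hfail
  obtain ⟨⟨J₁, hJ₁⟩, ⟨J₂, hJ₂⟩⟩ := hfail
  set X := ⋃ i ∈ J₁, update F k (F k \ {a}) i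
  set Y := ⋃ i ∈ J₂, update F k (F k \ {b}) i
  have hk₁ : k ∈ J₁ := h.mem_of_update_lt hJ₁
  have hk₂ : k ∈ J₂ := h.mem_of_update_lt hJ₂
  have hunion : ⋃ i ∈ J₁ ∪ J₂, F i ⊆ X ∪ Y := by
    simp only [iUnion_subset_iff, Finset.mem_union]
    rintro i hi e he
    obtain rfl | hik := eq_or_ne i k
    · obtain rfl | hea := eq_or_ne e a
      · exact Or.inr (mem_biUnion hk₂ (by simpa [hab] using he))
      · exact Or.inl (mem_biUnion hk₁ (by simpa [hea] using he))
    · rcases hi with hi | hi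
      · exact Or.inl (mem_biUnion hi (by rwa [update_of_ne hik]))
      · exact Or.inr (mem_biUnion hi (by rwa [update_of_ne hik]))
  have hinter : ⋃ i ∈ (J₁ ∩ J₂).erase k, F i ⊆ X ∩ Y := by
    simp only [iUnion_subset_iff, Finset.mem_erase, Finset.mem_inter]
    rintro i ⟨hik, hi₁, hi₂⟩ e he
    exact ⟨mem_biUnion hi₁ (by rwa [update_of_ne hik]),
      mem_biUnion hi₂ (by rwa [update_of_ne hik])⟩
  -- Submodularity: |J₁| + |J₂| - 1 ≤ r(X ∪ Y) + r(X ∩ Y) ≤ r X + r Y ≤ |J₁| + |J₂| - 2.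
  have hk : k ∈ J₁ ∩ J₂ := Finset.mem_inter.mpr ⟨hk₁, hk₂⟩
  have hrk_union := (h (J₁ ∪ J₂)).trans (matroidRank_mono hunion)
  have hrk_inter := (h _).trans (matroidRank_mono hinter)
  have hsubmod := matroidRank_inter_add_matroidRank_union_le M X Y
  have hcard := Finset.card_union_add_card_inter J₁ J₂
  have hcard_erase := Finset.card_erase_of_mem hk
  have hcard_pos := Finset.card_pos.mpr ⟨k, hk⟩
  omega

theorem RadoCondition.exists_indep_transversal [Fintype ι] {F : ι → Set α}
    (h : M.RadoCondition F) :
    ∃ x : ι → α, Injective x ∧ (∀ i, x i ∈ F i) ∧ M.Indep (range x) := by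
  classical
  induction hs : ∑ i, (F i).ncard using Nat.strong_induction_on generalizing F with
  | _ s ih =>
  by_cases hsmall : ∀ i, (F i).ncard ≤ 1
  · have hsingle (i : ι) : ∃ a, F i = {a} :=
      ncard_eq_one.mp (le_antisymm (hsmall i) ((h.nonempty i).ncard_pos (toFinite _)))
    choose x hx using hsingle
    obtain rfl : F = fun i ↦ {x i} := funext hx
    obtain ⟨hinj, hind⟩ := h.indep_transversal_of_singleton
    exact ⟨x, hinj, fun i ↦ rfl, hind⟩
  simp only [not_forall, not_le] at hsmall
  obtain ⟨k, hk⟩ := hsmall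
  obtain ⟨a, ha, b, hb, hab⟩ := (one_lt_ncard (toFinite _)).mp hk
  obtain ⟨c, hc, hrado⟩ : ∃ c ∈ F k, M.RadoCondition (update F k (F k \ {c})) := by
    rcases h.update_diff_singleton k hab with h' | h'
    exacts [⟨a, ha, h'⟩, ⟨b, hb, h'⟩]
  have hsub (i : ι) : update F k (F k \ {c}) i ⊆ F i := by
    obtain rfl | hik := eq_or_ne i k
    · simp
    · rw [update_of_ne hik]
  have hlt : ∑ i, (update F k (F k \ {c}) i).ncard < s := by
    refine hs ▸ Finset.sum_lt_sum (fun i _ ↦ ncard_le_ncard (hsub i) (toFinite _))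
      ⟨k, Finset.mem_univ k, ?_⟩
    simpa using ncard_sdiff_singleton_lt_of_mem hc (toFinite _)
  obtain ⟨x, hinj, hxF, hind⟩ := ih _ hlt hrado rfl
  exact ⟨x, hinj, fun i ↦ hsub i (hxF i), hind⟩

end Matroid

theorem rado_matroid_transversal_general {α : Type*} [Fintype α] (M : Matroid α)
    {n : ℕ} (F : Fin n → Set α) :
    (∃ x : Fin n → α, Function.Injective x ∧ (∀ i, x i ∈ F i) ∧ M.Indep (Set.range x)) ↔
      ∀ J : Finset (Fin n), J.card ≤ matroidRank M (⋃ i ∈ J, F i) :=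
  ⟨fun ⟨_, hx, hxF, hind⟩ ↦ Matroid.radoCondition_of_indep_transversal hx hxF hind,
    Matroid.RadoCondition.exists_indep_transversal⟩

/-- Rado's theorem: for a matroid `M` on a finite ground set `F` with rank function `r` and a
family `F₁,…,Fₙ` of subsets of `F`, there is a transversal of the family which is independent
in `M` (an injective choice `i ↦ xᵢ` with `xᵢ ∈ Fᵢ` and `{x₁,…,xₙ}` independent) iff
`r (⋃_{i ∈ J} Fᵢ) ≥ |J|` for all `J ⊆ {1,…,n}`. -/
theorem rado_matroid_transversal {α : Type*} [Fintype α] (M : Matroid α)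
    (hE : M.E = Set.univ) {n : ℕ} (F : Fin n → Set α) :
    (∃ x : Fin n → α, Function.Injective x ∧ (∀ i, x i ∈ F i) ∧ M.Indep (Set.range x)) ↔
      ∀ J : Finset (Fin n), J.card ≤ matroidRank M (⋃ i ∈ J, F i) :=
  rado_matroid_transversal_general M F
end

section
/- Let A, B be finite-dimensional K-subspaces of L with K ⊆ A ∩ B. Suppose there exist K-subspaces Ā, B̄ of L such that A = K ⊕ Ā, B = K ⊕ B̄, and K ∩ (Ā + B̄ + span_K(Ā·B̄)) = {0}. Then dim_K span_K(A·B) ≥ dim_K A + dim_K B − 1. -/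
/-!
With `S = Ā + B̄ + ⟨Ā·B̄⟩` one has `A·B = K ⊕ S`, so it suffices that `dim Ā + dim B̄ ≤ dim S`.
This holds for any two subspaces `A, B` of a finite-dimensional `S ∌ 1` with `A·B ⊆ S`, by a linear
Dyson transform: for `0 ≠ e ∈ A ∩ B` the pairs `(A + Ae, B ∩ e⁻¹B)` and `(A ∩ Ae⁻¹, B + eB)` again
have their product in `S`, and their total dimensions add up to `2 (dim A + dim B)`. The first pair
has a strictly smaller second member, since `eB ⊆ B` would force `eB = B ∋ e`, hence `1 ∈ B`.
Passing to one of them repeatedly ends at a pair with `A ∩ B = 0`, where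
`dim A + dim B = dim (A + B) ≤ dim S`.
-/

open Module Submodule

namespace Submodule

section Transform

variable {K V : Type*} [DivisionRing K] [AddCommGroup V] [Module K V]

theorem finrank_sup_map_add_finrank_inf_comap {f : V →ₗ[K] V} (hf : Function.Injective f)
    (A : Submodule K V) [FiniteDimensional K A] :
    finrank K ↥(A ⊔ A.map f) + finrank K ↥(A ⊓ A.comap f) = 2 * finrank K A := by
  have hmap : finrank K ↥(A.map f) = finrank K A := (equivMapOfInjective f hf A).finrank_eq.symm
  have hinf : (A ⊓ A.comap f).map f = A ⊓ A.map f := by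
    rw [map_inf f hf, map_comap_eq, inf_left_comm,
      inf_of_le_right (inf_le_left.trans LinearMap.map_le_range), inf_comm]
  have hinf_rank : finrank K ↥(A ⊓ A.comap f) = finrank K ↥(A ⊓ A.map f) := by
    rw [← hinf]; exact (equivMapOfInjective f hf _).finrank_eq
  have := finrank_sup_add_finrank_inf_eq A (A.map f)
  omega

end Transform

section Algebra

variable {R A : Type*} [CommSemiring R] [Semiring A] [Algebra R A]

theorem one_sup_mul_one_sup (M N : Submodule R A) :
    (1 ⊔ M) * (1 ⊔ N) = 1 ⊔ (M ⊔ N ⊔ M * N) := by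
  rw [sup_mul, mul_sup, mul_sup, one_mul, one_mul, mul_one]
  ac_rfl

theorem map_mulRight_le_mul (M : Submodule R A) {N : Submodule R A} {e : A} (he : e ∈ N) :
    M.map (LinearMap.mulRight R e) ≤ M * N :=
  map_le_iff_le_comap.mpr fun _ hx ↦ mul_mem_mul hx he

theorem map_mulLeft_le_mul {M : Submodule R A} (N : Submodule R A) {e : A} (he : e ∈ M) :
    N.map (LinearMap.mulLeft R e) ≤ M * N :=
  map_le_iff_le_comap.mpr fun _ hx ↦ mul_mem_mul he hx

theorem sup_map_mulRight_mul_inf_comap_mulLeft_le (M N : Submodule R A) (e : A) :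
    (M ⊔ M.map (LinearMap.mulRight R e)) * (N ⊓ N.comap (LinearMap.mulLeft R e)) ≤ M * N := by
  rw [sup_mul]
  refine sup_le (mul_le_mul' le_rfl inf_le_left) (mul_le.mpr ?_)
  rintro _ ⟨m, hm, rfl⟩ n ⟨-, hn⟩
  rw [LinearMap.mulRight_apply, mul_assoc]
  exact mul_mem_mul hm hn

theorem inf_comap_mulRight_mul_sup_map_mulLeft_le (M N : Submodule R A) (e : A) :
    (M ⊓ M.comap (LinearMap.mulRight R e)) * (N ⊔ N.map (LinearMap.mulLeft R e)) ≤ M * N := by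
  rw [mul_sup]
  refine sup_le (mul_le_mul' inf_le_left le_rfl) (mul_le.mpr ?_)
  rintro m ⟨-, hm⟩ _ ⟨n, hn, rfl⟩
  rw [LinearMap.mulLeft_apply, ← mul_assoc]
  exact mul_mem_mul hm hn

end Algebra

section DivisionRing

variable {K L : Type*} [Field K] [DivisionRing L] [Algebra K L]

theorem finrank_inf_comap_mulLeft_lt {B : Submodule K L} [FiniteDimensional K B] (hB : (1 : L) ∉ B)
    {e : L} (he : e ∈ B) (he0 : e ≠ 0) :
    finrank K ↥(B ⊓ B.comap (LinearMap.mulLeft K e)) < finrank K B := by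
  by_contra! hle
  have hinv : B ≤ B.comap (LinearMap.mulLeft K e) :=
    inf_eq_left.mp (eq_of_le_of_finrank_le inf_le_left hle)
  have hsurj : B.map (LinearMap.mulLeft K e) = B :=
    eq_of_le_of_finrank_eq (map_le_iff_le_comap.mpr hinv)
      (equivMapOfInjective _ (mul_right_injective₀ he0) B).finrank_eq.symm
  obtain ⟨b, hb, heb⟩ := mem_map.mp (hsurj.symm ▸ he)
  have hb1 : b = 1 := mul_right_injective₀ he0 (heb.trans (mul_one e).symm)
  exact hB (hb1 ▸ hb)

theorem finrank_add_finrank_le_of_mul_le {S : Submodule K L} [FiniteDimensional K S]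
    (hS : (1 : L) ∉ S) {A B : Submodule K L} (hA : A ≤ S) (hB : B ≤ S) (hAB : A * B ≤ S) :
    finrank K A + finrank K B ≤ finrank K S := by
  have := finiteDimensional_of_le hA
  have := finiteDimensional_of_le hB
  by_cases hdisj : A ⊓ B = ⊥
  · calc finrank K A + finrank K B = finrank K ↥(A ⊔ B) := by
          rw [← finrank_sup_add_finrank_inf_eq, hdisj, finrank_bot, add_zero]
      _ ≤ finrank K S := finrank_mono (sup_le hA hB)
  obtain ⟨e, he, he0⟩ := (Submodule.ne_bot_iff _).mp hdisj
  set A₁ := A ⊔ A.map (LinearMap.mulRight K e)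
  set B₁ := B ⊓ B.comap (LinearMap.mulLeft K e)
  set A₂ := A ⊓ A.comap (LinearMap.mulRight K e)
  set B₂ := B ⊔ B.map (LinearMap.mulLeft K e)
  have hsumA : finrank K A₁ + finrank K A₂ = 2 * finrank K A :=
    finrank_sup_map_add_finrank_inf_comap (mul_left_injective₀ he0) A
  have hsumB : finrank K B₂ + finrank K B₁ = 2 * finrank K B :=
    finrank_sup_map_add_finrank_inf_comap (mul_right_injective₀ he0) B
  have hA₁ : A₁ ≤ S := sup_le hA ((map_mulRight_le_mul A he.2).trans hAB)
  have hB₁ : B₁ ≤ S := inf_le_left.trans hB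
  have hA₂ : A₂ ≤ S := inf_le_left.trans hA
  have hB₂ : B₂ ≤ S := sup_le hB ((map_mulLeft_le_mul B he.1).trans hAB)
  have hrank₁ : finrank K A₁ + finrank K B₁ ≤ finrank K S + finrank K S :=
    add_le_add (finrank_mono hA₁) (finrank_mono hB₁)
  have hrank₂ : finrank K A₂ + finrank K B₂ ≤ finrank K S + finrank K S :=
    add_le_add (finrank_mono hA₂) (finrank_mono hB₂)
  have hB₁_lt : finrank K B₁ < finrank K B :=
    finrank_inf_comap_mulLeft_lt (fun h ↦ hS (hB h)) he.2 he0
  -- By `hsumA` and `hsumB`, either the first transform (which shrinks `B`) loses no dimension,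
  -- or the second one strictly gains.
  by_cases hgrow : finrank K A + finrank K B ≤ finrank K A₁ + finrank K B₁
  · have := finrank_add_finrank_le_of_mul_le hS hA₁ hB₁
      ((sup_map_mulRight_mul_inf_comap_mulLeft_le A B e).trans hAB)
    omega
  · have := finrank_add_finrank_le_of_mul_le hS hA₂ hB₂
      ((inf_comap_mulRight_mul_sup_map_mulLeft_le A B e).trans hAB)
    omega
termination_by (2 * finrank K S - (finrank K A + finrank K B), finrank K B)
decreasing_by all_goals (rw [Prod.lex_def]; simp only [A₁, B₁, A₂, B₂] at *; omega)

end DivisionRing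

section FiniteDimensional

variable {K L : Type*} [Field K] [Ring L] [Algebra K L]

theorem finiteDimensional_mul (M N : Submodule K L) [FiniteDimensional K M]
    [FiniteDimensional K N] : FiniteDimensional K ↥(M * N) :=
  Module.Finite.iff_fg.mpr (.mul (Module.Finite.iff_fg.mp ‹_›) (Module.Finite.iff_fg.mp ‹_›))

theorem finrank_one_sup_of_inf_eq_bot [Nontrivial L] {M : Submodule K L} [FiniteDimensional K M]
    (hM : 1 ⊓ M = ⊥) : finrank K ↥(1 ⊔ M) = finrank K M + 1 := by
  have hone : finrank K ↥(1 : Submodule K L) = 1 := by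
    rw [one_eq_span]
    exact finrank_span_singleton one_ne_zero
  have : FiniteDimensional K ↥(1 : Submodule K L) := by
    rw [one_eq_span]
    infer_instance
  have := finrank_sup_add_finrank_inf_eq 1 M
  rw [hM, finrank_bot, hone] at this
  omega

end FiniteDimensional

end Submodule

theorem kemperman_linear_general {K L : Type*} [Field K] [DivisionRing L] [Algebra K L]
    (A B : Submodule K L) [FiniteDimensional K A] [FiniteDimensional K B]
    (Abar Bbar : Submodule K L)
    (hAsum : (1 : Submodule K L) ⊔ Abar = A)
    (hAdisj : (1 : Submodule K L) ⊓ Abar = ⊥)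
    (hBsum : (1 : Submodule K L) ⊔ Bbar = B)
    (hBdisj : (1 : Submodule K L) ⊓ Bbar = ⊥)
    (h : (1 : Submodule K L) ⊓ (Abar ⊔ Bbar ⊔ Abar * Bbar) = ⊥) :
    Module.finrank K A + Module.finrank K B - 1 ≤ Module.finrank K ↥(A * B) := by
  have := finiteDimensional_of_le (hAsum ▸ le_sup_right : Abar ≤ A)
  have := finiteDimensional_of_le (hBsum ▸ le_sup_right : Bbar ≤ B)
  have := finiteDimensional_mul Abar Bbar
  have hS : (1 : L) ∉ Abar ⊔ Bbar ⊔ Abar * Bbar := fun h1 ↦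
    one_ne_zero ((mem_bot K).mp (h ▸ mem_inf.mpr ⟨one_le.mp le_rfl, h1⟩))
  have key := finrank_add_finrank_le_of_mul_le hS (le_sup_left.trans le_sup_left)
    (le_sup_right.trans le_sup_left) le_sup_right
  rw [← hAsum, ← hBsum, one_sup_mul_one_sup, finrank_one_sup_of_inf_eq_bot h,
    finrank_one_sup_of_inf_eq_bot hAdisj, finrank_one_sup_of_inf_eq_bot hBdisj]
  omega

/-- Linear version of Kemperman's theorem: if `A, B` are finite-dimensional `K`-subspaces
of `L` containing `K` (the subspace `1`), admitting complements `Ā, B̄` of `K` in `A`, `B`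
with `K ∩ (Ā + B̄ + ⟨Ā·B̄⟩) = 0`, then `dim ⟨A·B⟩ ≥ dim A + dim B - 1`. -/
theorem kemperman_linear {K L : Type*} [Field K] [DivisionRing L] [Algebra K L]
    (A B : Submodule K L) [FiniteDimensional K A] [FiniteDimensional K B]
    (hKA : (1 : Submodule K L) ≤ A) (hKB : (1 : Submodule K L) ≤ B)
    (Abar Bbar : Submodule K L)
    (hAsum : (1 : Submodule K L) ⊔ Abar = A)
    (hAdisj : (1 : Submodule K L) ⊓ Abar = ⊥)
    (hBsum : (1 : Submodule K L) ⊔ Bbar = B)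
    (hBdisj : (1 : Submodule K L) ⊓ Bbar = ⊥)
    (h : (1 : Submodule K L) ⊓ (Abar ⊔ Bbar ⊔ Abar * Bbar) = ⊥) :
    Module.finrank K A + Module.finrank K B - 1 ≤ Module.finrank K ↥(A * B) :=
  kemperman_linear_general A B Abar Bbar hAsum hAdisj hBsum hBdisj h
end

section
/- L has the linear matching property over K if and only if every intermediate sub-division-ring M with K ⊆ M ⊆ L that is finite-dimensional over K satisfies M = K or M = L. -/
/-- `A` is matched to `B` if every basis of `A` can be matched to some basis of `B`. -/
def SubspaceMatched (K : Type*) {L : Type*} [Field K] [DivisionRing L] [Algebra K L]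
    (A B : Submodule K L) : Prop :=
  ∀ (n : ℕ) (a : Fin n → L), IsLinBasis K a A →
    ∃ b : Fin n → L, IsLinBasis K b B ∧ MatchedBases K a b A B

/-- `L` has the linear matching property over `K` if for every `n ≥ 1` and all
`n`-dimensional subspaces `A, B` of `L` with `1 ∉ B`, `A` is matched to `B`. -/
def LinearMatchingProperty (K L : Type*) [Field K] [DivisionRing L] [Algebra K L] : Prop :=
  ∀ n : ℕ, 1 ≤ n → ∀ A B : Submodule K L,
    Module.finrank K A = n → Module.finrank K B = n → (1 : L) ∉ B →
      SubspaceMatched K A B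

/-!
A basis `a` of `A` is matched to `B` as soon as the subspaces `Sᵢ = {x ∈ B | aᵢ x ∈ A}` admit a
basis `b` of `B` with `Sᵢ ⊆ span {bⱼ | j ≠ i}`. Rado's theorem, applied to the annihilators of the
`Sᵢ` in the dual of `B`, provides such a basis once `dim (⋂_{i ∈ I} Sᵢ) + |I| ≤ n` for all `I`.
Without proper finite-dimensional intermediate division rings this inequality is the linear
Kneser-type bound `dim X + dim S ≤ dim XS + 1` (for `1 ∈ S` and `XS ≠ L`), applied to
`X = span {aᵢ | i ∈ I}` and `S = K + ⋂_{i ∈ I} Sᵢ`. The bound comes from Hamidoune's isoperimetric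
method: an atom of `X ↦ XS`, translated to contain `1`, is closed under multiplication, hence equals
`K`. This needs two intersecting atoms to have a proper image of their sum, which is automatic when
`L` is infinite-dimensional; otherwise the pairing `τ(xy)` exchanges the fragments of `X ↦ XS` and
`X ↦ SX`, and the side with the smaller atoms qualifies.

Conversely, if `K ⊊ M ⊊ L` is finite-dimensional and `z ∉ M`, let `B` be a hyperplane of `M + Kz`
missing `1`. A nonzero `x ∈ B ∩ M` has `aᵢ x ∈ M` for every basis vector `aᵢ` of `M`, so no basis of
`B` can be matched to a basis of `M`.
-/

open Module Submodule Pointwise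

namespace Isoperimetric

variable {K V : Type*} [Field K] [AddCommGroup V] [Module K V]

/-- Abstracts `X ↦ X * S` and `X ↦ S * X` for a finite-dimensional `S ∋ 1`. -/
structure IsExpansion (f : Submodule K V → Submodule K V) : Prop where
  map_sup : ∀ X Y, f (X ⊔ Y) = f X ⊔ f Y
  le_map : ∀ X, X ≤ f X
  finiteDimensional : ∀ X : Submodule K V, FiniteDimensional K X → FiniteDimensional K (f X)

variable (f : Submodule K V → Submodule K V)

def IsAdmissible (X : Submodule K V) : Prop :=
  X ≠ ⊥ ∧ FiniteDimensional K X ∧ f X ≠ ⊤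

noncomputable def boundary (X : Submodule K V) : ℕ :=
  finrank K (f X) - finrank K X

noncomputable def connectivity : ℕ :=
  sInf (boundary f '' {X | IsAdmissible f X})

def IsFragment (X : Submodule K V) : Prop :=
  IsAdmissible f X ∧ boundary f X = connectivity f

noncomputable def atomRank : ℕ :=
  sInf ((fun X : Submodule K V => finrank K X) '' {X | IsFragment f X})

def IsAtom (X : Submodule K V) : Prop :=
  IsFragment f X ∧ finrank K X = atomRank f

variable {f} {X Y : Submodule K V}

theorem IsExpansion.monotone (hf : IsExpansion f) : Monotone f := fun X Y h => by
  rw [← sup_eq_right.2 h, hf.map_sup]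
  exact le_sup_left

theorem IsExpansion.map_top (hf : IsExpansion f) : f ⊤ = ⊤ :=
  top_le_iff.1 (hf.le_map ⊤)

theorem IsExpansion.finrank_map (hf : IsExpansion f) (X : Submodule K V) [FiniteDimensional K X] :
    finrank K (f X) = finrank K X + boundary f X := by
  have := hf.finiteDimensional X ‹_›
  have := Submodule.finrank_mono (hf.le_map X)
  unfold boundary
  omega

theorem connectivity_le (hX : IsAdmissible f X) : connectivity f ≤ boundary f X :=
  Nat.sInf_le ⟨X, hX, rfl⟩

theorem atomRank_le (hX : IsFragment f X) : atomRank f ≤ finrank K X :=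
  Nat.sInf_le ⟨X, hX, rfl⟩

theorem exists_isFragment (h : ∃ X, IsAdmissible f X) : ∃ X, IsFragment f X := by
  obtain ⟨X, hX⟩ := h
  obtain ⟨Y, hY, hYX⟩ :=
    Nat.sInf_mem (s := boundary f '' {X | IsAdmissible f X}) ⟨_, X, hX, rfl⟩
  exact ⟨Y, hY, hYX⟩

theorem exists_isAtom (h : ∃ X, IsAdmissible f X) : ∃ X, IsAtom f X := by
  obtain ⟨X, hX⟩ := exists_isFragment h
  obtain ⟨Y, hY, hYX⟩ :=
    Nat.sInf_mem (s := (fun X : Submodule K V => finrank K X) '' {X | IsFragment f X})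
      ⟨_, X, hX, rfl⟩
  exact ⟨Y, hY, hYX⟩

theorem IsExpansion.boundary_inf_add_boundary_sup_le (hf : IsExpansion f) (X Y : Submodule K V)
    [FiniteDimensional K X] [FiniteDimensional K Y] :
    boundary f (X ⊓ Y) + boundary f (X ⊔ Y) ≤ boundary f X + boundary f Y := by
  have := hf.finiteDimensional X ‹_›
  have := hf.finiteDimensional Y ‹_›
  have hX := hf.finrank_map X
  have hY := hf.finrank_map Y
  have hinf := hf.finrank_map (X ⊓ Y)
  have hsup := hf.finrank_map (X ⊔ Y)
  have hmono : finrank K (f (X ⊓ Y)) ≤ finrank K ↥(f X ⊓ f Y) :=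
    Submodule.finrank_mono (le_inf (hf.monotone inf_le_left) (hf.monotone inf_le_right))
  have := Submodule.finrank_sup_add_finrank_inf_eq (f X) (f Y)
  have := Submodule.finrank_sup_add_finrank_inf_eq X Y
  rw [hf.map_sup] at hsup
  omega

theorem IsAdmissible.inf (hf : IsExpansion f) (hX : IsAdmissible f X) (hXY : X ⊓ Y ≠ ⊥) :
    IsAdmissible f (X ⊓ Y) :=
  have := hX.2.1
  ⟨hXY, inferInstance, ne_top_of_le_ne_top hX.2.2 (hf.monotone inf_le_left)⟩

theorem IsFragment.inf (hf : IsExpansion f) (hX : IsFragment f X) (hY : IsFragment f Y)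
    (hXY : X ⊓ Y ≠ ⊥) (hsup : f (X ⊔ Y) ≠ ⊤) : IsFragment f (X ⊓ Y) := by
  have := hX.1.2.1
  have := hY.1.2.1
  have hinf := connectivity_le (hX.1.inf hf hXY)
  have hκsup := connectivity_le (f := f) (X := X ⊔ Y)
    ⟨fun h => hX.1.1 (eq_bot_iff.2 (h ▸ le_sup_left)), inferInstance, hsup⟩
  have := hf.boundary_inf_add_boundary_sup_le X Y
  rw [hX.2, hY.2] at this
  exact ⟨hX.1.inf hf hXY, by omega⟩

theorem IsAtom.eq_of_inf_ne_bot (hf : IsExpansion f) (hX : IsAtom f X) (hY : IsAtom f Y)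
    (hXY : X ⊓ Y ≠ ⊥) (hsup : f (X ⊔ Y) ≠ ⊤) : X = Y := by
  have := hX.1.1.2.1
  have := hY.1.1.2.1
  have hle := atomRank_le (hX.1.inf hf hY.1 hXY hsup)
  have hX' := Submodule.eq_of_le_of_finrank_le inf_le_left (hX.2.trans_le hle)
  have hY' := Submodule.eq_of_le_of_finrank_le inf_le_right (hY.2.trans_le hle)
  rw [← hX', hY']

theorem IsExpansion.map_sup_ne_top_of_isAtom [FiniteDimensional K V] (hf : IsExpansion f)
    (hV : 2 * atomRank f + connectivity f < finrank K V + 1) (hX : IsAtom f X) (hY : IsAtom f Y)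
    (hXY : X ⊓ Y ≠ ⊥) : f (X ⊔ Y) ≠ ⊤ := by
  intro htop
  have hinf := connectivity_le (hX.1.1.inf hf hXY)
  have hsub := hf.boundary_inf_add_boundary_sup_le X Y
  have hsup := hf.finrank_map (X ⊔ Y)
  have hdim := Submodule.finrank_sup_add_finrank_inf_eq X Y
  have hpos : finrank K ↥(X ⊓ Y) ≠ 0 := fun h => hXY (Submodule.finrank_eq_zero.1 h)
  rw [htop, finrank_top] at hsup
  rw [hX.1.2, hY.1.2] at hsub
  rw [hX.2, hY.2] at hdim
  omega

theorem IsAtom.smul {G : Type*} [Group G] [DistribMulAction G V] [SMulCommClass G K V] {g : G}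
    (hfg : ∀ X, f (g • X) = g • f X) (hX : IsAtom f X) : IsAtom f (g • X) := by
  have hrank : ∀ Y : Submodule K V, finrank K ↥(g • Y) = finrank K Y := fun Y =>
    LinearEquiv.finrank_map_eq (DistribMulAction.toLinearEquiv K V g) Y
  have := hX.1.1.2.1
  have hbot : g • X ≠ ⊥ := fun h => hX.1.1.1 (MulAction.injective g (h.trans (smul_bot' g).symm))
  have hsmul_top : g • (⊤ : Submodule K V) = ⊤ := by
    rw [Submodule.pointwise_smul_def, Submodule.map_top]
    exact LinearMap.range_eq_top.2 (MulAction.surjective g)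
  have htop : g • f X ≠ ⊤ := fun h =>
    hX.1.1.2.2 (MulAction.injective g (h.trans hsmul_top.symm))
  have hbd : boundary f (g • X) = boundary f X := by
    rw [boundary, boundary, hfg, hrank, hrank]
  refine ⟨⟨⟨hbot, ?_, by rwa [hfg]⟩, hbd.trans hX.1.2⟩, (hrank X).trans hX.2⟩
  rw [Submodule.pointwise_smul_def]
  infer_instance

theorem exists_isAtom_smul_eq {G : Type*} [Group G] [DistribMulAction G V] [SMulCommClass G K V]
    (hf : IsExpansion f) (hfG : ∀ (g : G) X, f (g • X) = g • f X) {v : V}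
    (hv : ∀ x : V, x ≠ 0 → ∃ g : G, g • v = x)
    (hsep : ∀ X Y, IsAtom f X → IsAtom f Y → X ⊓ Y ≠ ⊥ → f (X ⊔ Y) ≠ ⊤)
    (hne : ∃ X, IsAdmissible f X) :
    ∃ A, IsAtom f A ∧ v ∈ A ∧ ∀ g : G, g • v ∈ A → g • A = A := by
  obtain ⟨A₀, hA₀⟩ := exists_isAtom hne
  obtain ⟨_, haA, ha⟩ := Submodule.exists_mem_ne_zero_of_ne_bot hA₀.1.1.1
  obtain ⟨g₀, rfl⟩ := hv _ ha
  have hA := hA₀.smul (hfG g₀⁻¹)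
  have hvA : v ∈ g₀⁻¹ • A₀ := by
    simpa using Submodule.smul_mem_pointwise_smul (g₀ • v) g₀⁻¹ A₀ haA
  refine ⟨g₀⁻¹ • A₀, hA, hvA, fun g hg => ?_⟩
  have hgv : g • v ≠ 0 := by
    rw [Ne, smul_eq_zero_iff_eq] at ha ⊢
    exact ha
  have hinf : g • (g₀⁻¹ • A₀) ⊓ g₀⁻¹ • A₀ ≠ ⊥ := Submodule.ne_bot_iff _ |>.2
    ⟨g • v, ⟨Submodule.smul_mem_pointwise_smul _ g _ hvA, hg⟩, hgv⟩
  have hgA := hA.smul (hfG g)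
  exact hgA.eq_of_inf_ne_bot hf hA hinf (hsep _ _ hgA hA hinf)

section Duality

variable [FiniteDimensional K V] {g p : Submodule K V → Submodule K V}

theorem IsAdmissible.dual (hf : IsExpansion f) (hg : IsExpansion g)
    (hp : ∀ X, finrank K (p X) = finrank K V - finrank K X) (hgp : ∀ X, g (p (f X)) ≤ p X)
    (hX : IsAdmissible f X) :
    IsAdmissible g (p (f X)) ∧ boundary g (p (f X)) ≤ boundary f X ∧
      finrank K (p (f X)) + finrank K X + boundary f X = finrank K V := by
  have := hX.2.1
  have hfX := hf.finrank_map X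
  have hlt := Submodule.finrank_lt hX.2.2
  have hpos : finrank K X ≠ 0 := fun h => hX.1 (Submodule.finrank_eq_zero.1 h)
  have hpfX := hp (f X)
  have hpX := hp X
  have hle := Submodule.finrank_mono (hgp X)
  have hgpfX := hg.finrank_map (p (f X))
  refine ⟨⟨fun h => ?_, inferInstance, fun h => ?_⟩, by omega, by omega⟩
  · rw [h, finrank_bot] at hpfX
    omega
  · rw [h, finrank_top] at hle
    omega

theorem connectivity_le_of_dual (hf : IsExpansion f) (hg : IsExpansion g)
    (hp : ∀ X, finrank K (p X) = finrank K V - finrank K X) (hgp : ∀ X, g (p (f X)) ≤ p X)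
    (hne : ∃ X, IsAdmissible f X) : (∃ Y, IsAdmissible g Y) ∧ connectivity g ≤ connectivity f := by
  obtain ⟨F, hF⟩ := exists_isFragment hne
  obtain ⟨hG, hle, -⟩ := hF.1.dual hf hg hp hgp
  exact ⟨⟨_, hG⟩, (connectivity_le hG).trans (hle.trans hF.2.le)⟩

theorem atomRank_add_connectivity_add_atomRank_le (hf : IsExpansion f) (hg : IsExpansion g)
    (hp : ∀ X, finrank K (p X) = finrank K V - finrank K X) (hgp : ∀ X, g (p (f X)) ≤ p X)
    (hfg : connectivity g = connectivity f) (hne : ∃ X, IsAdmissible f X) :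
    atomRank g + connectivity f + atomRank f ≤ finrank K V := by
  obtain ⟨F, hF⟩ := exists_isAtom hne
  obtain ⟨hG, hle, hdim⟩ := hF.1.1.dual hf hg hp hgp
  have := atomRank_le (f := g)
    ⟨hG, le_antisymm (hle.trans_eq (hF.1.2.trans hfg.symm)) (connectivity_le hG)⟩
  rw [hF.1.2, hF.2] at hdim
  omega

end Duality

end Isoperimetric

section DivisionRing

open Isoperimetric

variable {K L : Type*} [Field K] [DivisionRing L] [Algebra K L]

instance Submodule.finiteDimensional_mul_s10 (X S : Submodule K L) [FiniteDimensional K X]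
    [FiniteDimensional K S] : FiniteDimensional K ↥(X * S) :=
  Module.Finite.iff_fg.2 ((Module.Finite.iff_fg.1 ‹_›).mul (Module.Finite.iff_fg.1 ‹_›))

theorem isExpansion_mul_right {S : Submodule K L} (h1 : (1 : L) ∈ S) [FiniteDimensional K S] :
    IsExpansion (· * S : Submodule K L → Submodule K L) where
  map_sup X Y := Submodule.sup_mul X Y S
  le_map X := by simpa using mul_le_mul_right (Submodule.one_le.2 h1) X
  finiteDimensional X _ := inferInstance

theorem isExpansion_mul_left {S : Submodule K L} (h1 : (1 : L) ∈ S) [FiniteDimensional K S] :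
    IsExpansion (S * · : Submodule K L → Submodule K L) where
  map_sup X Y := Submodule.mul_sup S X Y
  le_map X := by simpa using mul_le_mul_left (Submodule.one_le.2 h1) X
  finiteDimensional X _ := inferInstance

theorem connectivity_add_one_eq_of_isAtom
    (hK : ∀ M : Subalgebra K L, FiniteDimensional K M → M = ⊥ ∨ M = ⊤)
    {f : Submodule K L → Submodule K L} (hf : IsExpansion f) {A : Submodule K L}
    (hA : IsAtom f A) (h1 : (1 : L) ∈ A) (hmul : A * A ≤ A) :
    connectivity f + 1 = finrank K (f 1) := by
  have := hA.1.1.2.1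
  let M := A.toSubalgebra h1 fun x y hx hy => hmul (Submodule.mul_mem_mul hx hy)
  rcases hK M this with hM | hM
  · have hA1 : A = 1 := (congrArg Subalgebra.toSubmodule hM).trans Algebra.toSubmodule_bot
    have hone : finrank K ↥(1 : Submodule K L) = 1 := by
      rw [← Algebra.toSubmodule_bot]
      exact Subalgebra.finrank_bot
    have hfA := hf.finrank_map A
    rw [hA.1.2, hA1, hone] at hfA
    omega
  · have hA' : A = ⊤ := (congrArg Subalgebra.toSubmodule hM).trans Algebra.top_toSubmodule
    exact absurd (hA' ▸ hf.map_top) hA.1.1.2.2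

theorem connectivity_mul_right_add_one_of_separated
    (hK : ∀ M : Subalgebra K L, FiniteDimensional K M → M = ⊥ ∨ M = ⊤)
    {S : Submodule K L} (h1 : (1 : L) ∈ S) [FiniteDimensional K S]
    (hsep : ∀ X Y, IsAtom (· * S) X → IsAtom (· * S) Y → X ⊓ Y ≠ ⊥ → (X ⊔ Y) * S ≠ ⊤)
    (hne : ∃ X, IsAdmissible (· * S) X) :
    connectivity (· * S : Submodule K L → Submodule K L) + 1 = finrank K S := by
  have hf := isExpansion_mul_right h1
  obtain ⟨A, hA, h1A, hinv⟩ := exists_isAtom_smul_eq (G := Lˣ) hf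
    (fun g X => smul_mul_assoc g X S) (fun x hx => ⟨Units.mk0 x hx, mul_one x⟩) hsep hne
  have hmul : A * A ≤ A := Submodule.mul_le.2 fun x hx y hy => by
    rcases eq_or_ne x 0 with rfl | hx0
    · simp
    · rw [← hinv (Units.mk0 x hx0) (by simpa [Units.smul_def] using hx)]
      exact Submodule.smul_mem_pointwise_smul y _ A hy
  have := connectivity_add_one_eq_of_isAtom hK hf hA h1A hmul
  rwa [one_mul] at this

theorem connectivity_mul_left_add_one_of_separated
    (hK : ∀ M : Subalgebra K L, FiniteDimensional K M → M = ⊥ ∨ M = ⊤)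
    {S : Submodule K L} (h1 : (1 : L) ∈ S) [FiniteDimensional K S]
    (hsep : ∀ X Y, IsAtom (S * ·) X → IsAtom (S * ·) Y → X ⊓ Y ≠ ⊥ → S * (X ⊔ Y) ≠ ⊤)
    (hne : ∃ X, IsAdmissible (S * ·) X) :
    connectivity (S * · : Submodule K L → Submodule K L) + 1 = finrank K S := by
  have hf := isExpansion_mul_left h1
  obtain ⟨A, hA, h1A, hinv⟩ := exists_isAtom_smul_eq (G := Lᵐᵒᵖˣ) hf
    (fun g X => mul_smul_comm g S X)
    (fun x hx => ⟨Units.mk0 (MulOpposite.op x) (MulOpposite.op_ne_zero_iff x |>.2 hx), one_mul x⟩)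
    hsep hne
  have hmul : A * A ≤ A := Submodule.mul_le.2 fun x hx y hy => by
    rcases eq_or_ne y 0 with rfl | hy0
    · simp
    · have hy' : MulOpposite.op y ≠ 0 := MulOpposite.op_ne_zero_iff y |>.2 hy0
      rw [← hinv (Units.mk0 _ hy') (by simpa [Units.smul_def] using hy)]
      exact Submodule.smul_mem_pointwise_smul x _ A hx
  have := connectivity_add_one_eq_of_isAtom hK hf hA h1A hmul
  rwa [mul_one] at this

def mulForm (τ : Module.Dual K L) : LinearMap.BilinForm K L :=
  (LinearMap.mul K L).compr₂ τ

@[simp]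
theorem mulForm_apply (τ : Module.Dual K L) (x y : L) : mulForm τ x y = τ (x * y) := rfl

theorem mulForm_nondegenerate {τ : Module.Dual K L} (hτ : τ 1 ≠ 0) : (mulForm τ).Nondegenerate :=
  ⟨fun x hx => by_contra fun h => hτ (by simpa [h] using hx x⁻¹),
    fun y hy => by_contra fun h => hτ (by simpa [h] using hy y⁻¹)⟩

theorem mul_orthogonal_mul_le (τ : Module.Dual K L) (S X : Submodule K L) :
    S * (mulForm τ).orthogonal (X * S) ≤ (mulForm τ).orthogonal X := by
  refine Submodule.mul_le.2 fun s hs y hy => ?_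
  rw [LinearMap.BilinForm.mem_orthogonal_iff] at hy ⊢
  intro x hx
  simpa [mul_assoc] using hy (x * s) (Submodule.mul_mem_mul hx hs)

theorem flip_orthogonal_mul_le (τ : Module.Dual K L) (S X : Submodule K L) :
    (mulForm τ).flip.orthogonal (S * X) * S ≤ (mulForm τ).flip.orthogonal X := by
  refine Submodule.mul_le.2 fun y hy s hs => ?_
  rw [LinearMap.BilinForm.mem_orthogonal_iff] at hy ⊢
  intro x hx
  simpa [mul_assoc] using hy (s * x) (Submodule.mul_mem_mul hs hx)

theorem connectivity_mul_right_add_one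
    (hK : ∀ M : Subalgebra K L, FiniteDimensional K M → M = ⊥ ∨ M = ⊤)
    {S : Submodule K L} (h1 : (1 : L) ∈ S) [FiniteDimensional K S]
    (hne : ∃ X, IsAdmissible (· * S) X) :
    connectivity (· * S : Submodule K L → Submodule K L) + 1 = finrank K S := by
  have hf := isExpansion_mul_right h1
  by_cases hL : FiniteDimensional K L
  · have hg := isExpansion_mul_left h1
    obtain ⟨τ, hτ⟩ := Module.Projective.exists_dual_ne_zero K (one_ne_zero : (1 : L) ≠ 0)
    have hB := mulForm_nondegenerate hτ
    have hp := LinearMap.BilinForm.finrank_orthogonal hB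
    have hp' := LinearMap.BilinForm.finrank_orthogonal hB.flip
    obtain ⟨hne', hgf⟩ := connectivity_le_of_dual hf hg hp (mul_orthogonal_mul_le τ S) hne
    obtain ⟨-, hfg⟩ := connectivity_le_of_dual hg hf hp' (flip_orthogonal_mul_le τ S) hne'
    have := atomRank_add_connectivity_add_atomRank_le hf hg hp (mul_orthogonal_mul_le τ S)
      (le_antisymm hgf hfg) hne
    rcases le_total (atomRank (· * S)) (atomRank (S * ·)) with h | h
    · exact connectivity_mul_right_add_one_of_separated hK h1
        (fun _ _ => hf.map_sup_ne_top_of_isAtom (by omega)) hne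
    · have := connectivity_mul_left_add_one_of_separated hK h1
        (fun _ _ => hg.map_sup_ne_top_of_isAtom (by omega)) hne'
      omega
  · refine connectivity_mul_right_add_one_of_separated hK h1 (fun X Y hX hY _ htop => hL ?_) hne
    have := hX.1.1.2.1
    have := hY.1.1.2.1
    have := hf.finiteDimensional (X ⊔ Y) inferInstance
    rw [htop] at this
    exact Module.Finite.equiv Submodule.topEquiv

theorem finrank_add_finrank_le_finrank_mul_add_one
    (hK : ∀ M : Subalgebra K L, FiniteDimensional K M → M = ⊥ ∨ M = ⊤)
    {S X : Submodule K L} [FiniteDimensional K S] [FiniteDimensional K X] (h1 : (1 : L) ∈ S)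
    (hX : X ≠ ⊥) (hXS : X * S ≠ ⊤) :
    finrank K X + finrank K S ≤ finrank K ↥(X * S) + 1 := by
  have hX' : IsAdmissible (· * S) X := ⟨hX, inferInstance, hXS⟩
  have := connectivity_le hX'
  have := connectivity_mul_right_add_one hK h1 ⟨X, hX'⟩
  have := (isExpansion_mul_right h1).finrank_map X
  omega

end DivisionRing

theorem dualAnnihilator_finset_inf {K V ι : Type*} [Field K] [AddCommGroup V] [Module K V]
    (S : ι → Submodule K V) (t : Finset ι) :
    (t.inf S).dualAnnihilator = t.sup fun i => (S i).dualAnnihilator := by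
  classical
  induction t using Finset.induction_on with
  | empty => simp
  | insert i t _ ih =>
    rw [Finset.inf_insert, Finset.sup_insert, Subspace.dualAnnihilator_inf_eq, ih]

theorem linearIndepOn_insert_of_mkQ {K V ι : Type*} [Field K] [AddCommGroup V] [Module K V]
    {v : ι → V} {s : Set ι} {i : ι} (hi : i ∉ s) (hvi : v i ≠ 0)
    (hv : LinearIndepOn K ((K ∙ v i).mkQ ∘ v) s) : LinearIndepOn K v (insert i s) := by
  refine (linearIndepOn_insert hi).2 ⟨hv.of_comp _, fun hspan => hvi ?_⟩
  obtain ⟨l, hl, hlv⟩ := (Finsupp.mem_span_image_iff_linearCombination K).1 hspan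
  have hl0 : Finsupp.linearCombination K ((K ∙ v i).mkQ ∘ v) l = 0 := by
    rw [← Finsupp.apply_linearCombination, hlv, Submodule.mkQ_apply,
      Submodule.Quotient.mk_eq_zero]
    exact Submodule.mem_span_singleton_self _
  rw [← hlv, linearIndepOn_iff.1 hv l hl hl0, map_zero]

section Rado

variable {K V ι : Type*} [Field K] [AddCommGroup V] [Module K V] [FiniteDimensional K V]

theorem finrank_map_mkQ_add_finrank_inf (P W : Submodule K V) :
    finrank K ↥(W.map P.mkQ) + finrank K ↥(W ⊓ P) = finrank K W := by
  have := LinearMap.finrank_range_add_finrank_ker (P.mkQ.domRestrict W)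
  rwa [LinearMap.range_domRestrict, LinearMap.ker_domRestrict, Submodule.ker_mkQ,
    ← Submodule.finrank_map_subtype_eq, Submodule.map_comap_subtype] at this

variable {U : ι → Submodule K V} {s : Finset ι}

theorem finrank_sup_union_eq_card [DecidableEq ι] (hU : ∀ t ⊆ s, t.card ≤ finrank K ↥(t.sup U))
    {t₁ t₂ : Finset ι} (h₁ : t₁ ⊆ s) (h₂ : t₂ ⊆ s)
    (ht₁ : finrank K ↥(t₁.sup U) = t₁.card) (ht₂ : finrank K ↥(t₂.sup U) = t₂.card) :
    finrank K ↥((t₁ ∪ t₂).sup U) = (t₁ ∪ t₂).card := by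
  have hunion := hU (t₁ ∪ t₂) (Finset.union_subset h₁ h₂)
  have hinter := hU (t₁ ∩ t₂) (Finset.inter_subset_left.trans h₁)
  have hmono : finrank K ↥((t₁ ∩ t₂).sup U) ≤ finrank K ↥(t₁.sup U ⊓ t₂.sup U) :=
    Submodule.finrank_mono (le_inf (Finset.sup_mono Finset.inter_subset_left)
      (Finset.sup_mono Finset.inter_subset_right))
  have := Submodule.finrank_sup_add_finrank_inf_eq (t₁.sup U) (t₂.sup U)
  have := Finset.card_union_add_card_inter t₁ t₂
  rw [Finset.sup_union] at hunion ⊢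
  omega

theorem exists_greatest_finrank_sup_eq_card [DecidableEq ι]
    (hU : ∀ t ⊆ s, t.card ≤ finrank K ↥(t.sup U)) :
    ∃ t₀ ⊆ s, finrank K ↥(t₀.sup U) = t₀.card ∧
      ∀ t ⊆ s, finrank K ↥(t.sup U) = t.card → t ⊆ t₀ := by
  obtain ⟨t₀, ht₀, hmax⟩ := Finset.exists_max_image
    (s.powerset.filter fun t : Finset ι => finrank K ↥(t.sup U) = t.card) Finset.card
    ⟨∅, by simp⟩
  rw [Finset.mem_filter, Finset.mem_powerset] at ht₀
  refine ⟨t₀, ht₀.1, ht₀.2, fun t hts ht => ?_⟩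
  have htt₀ := finrank_sup_union_eq_card hU hts ht₀.1 ht ht₀.2
  have hcard := hmax (t ∪ t₀) (by simp [Finset.union_subset hts ht₀.1, htt₀])
  exact Finset.union_eq_right.1
    (Finset.eq_of_subset_of_card_le Finset.subset_union_right hcard).symm

theorem card_le_finrank_sup_map_mkQ [DecidableEq ι] (hU : ∀ t ⊆ s, t.card ≤ finrank K ↥(t.sup U))
    {t₀ : Finset ι} (ht₀ : ∀ t ⊆ s, finrank K ↥(t.sup U) = t.card → t ⊆ t₀) {u : V}
    (hu : u ∉ t₀.sup U) {t : Finset ι} (hts : t ⊆ s) :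
    t.card ≤ finrank K ↥(t.sup fun i => (U i).map (K ∙ u).mkQ) := by
  have hsup : (t.sup fun i => (U i).map (K ∙ u).mkQ) = (t.sup U).map (K ∙ u).mkQ := by
    simp only [Finset.sup_eq_iSup, Submodule.map_iSup]
  have hdim := finrank_map_mkQ_add_finrank_inf (K ∙ u) (t.sup U)
  have := hU t hts
  rw [hsup]
  by_cases htight : finrank K ↥(t.sup U) = t.card
  · have : t.sup U ⊓ (K ∙ u) = ⊥ := (Submodule.disjoint_span_singleton_of_notMem
      fun h => hu (Finset.sup_mono (f := U) (ht₀ t hts htight) h)).eq_bot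
    rw [this, finrank_bot] at hdim
    omega
  · have := Submodule.finrank_mono (inf_le_right : t.sup U ⊓ (K ∙ u) ≤ K ∙ u)
    rw [finrank_span_singleton (show u ≠ 0 from fun h => hu (h ▸ zero_mem _))] at this
    omega

/-- Rado's theorem. Call `t` tight if `finrank (t.sup U) = t.card`. Choose `u ∈ U i₀` outside the
span of the greatest tight `t₀ ⊆ s`; modulo `K ∙ u` the condition still holds on `s`, because it
only loses a dimension on sets that are not tight. -/
theorem exists_linearIndepOn_mem_of_card_le_finrank (U : ι → Submodule K V) (s : Finset ι)
    (hU : ∀ t ⊆ s, t.card ≤ finrank K ↥(t.sup U)) :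
    ∃ v : ι → V, (∀ i ∈ s, v i ∈ U i) ∧ LinearIndepOn K v (s : Set ι) := by
  classical
  induction s using Finset.induction_on generalizing V with
  | empty => exact ⟨0, by simp, by simp⟩
  | insert i₀ s hi₀ ih =>
    have hUs : ∀ t ⊆ s, t.card ≤ finrank K ↥(t.sup U) := fun t ht =>
      hU t (ht.trans (Finset.subset_insert i₀ s))
    obtain ⟨t₀, ht₀s, ht₀, hmax⟩ := exists_greatest_finrank_sup_eq_card hUs
    obtain ⟨u, huU, hut₀⟩ : ∃ u ∈ U i₀, u ∉ t₀.sup U := by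
      refine SetLike.not_le_iff_exists.1 fun hle => ?_
      have := hU (insert i₀ t₀) (Finset.insert_subset_insert i₀ ht₀s)
      rw [Finset.sup_insert, sup_eq_right.2 hle,
        Finset.card_insert_of_notMem fun h => hi₀ (ht₀s h), ht₀] at this
      omega
    obtain ⟨w, hwU, hw⟩ := ih (fun i => (U i).map (K ∙ u).mkQ) fun t hts =>
      card_le_finrank_sup_map_mkQ hUs hmax hut₀ hts
    have hlift : ∀ i, ∃ x, (i ∈ s → x ∈ U i ∧ (K ∙ u).mkQ x = w i) ∧ (i ∉ s → x = u) :=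
      fun i => by
        by_cases hi : i ∈ s
        · obtain ⟨x, hx, hxw⟩ := hwU i hi
          exact ⟨x, fun _ => ⟨hx, hxw⟩, fun h => absurd hi h⟩
        · exact ⟨u, fun h => absurd h hi, fun _ => rfl⟩
    choose v hvs hvu using hlift
    refine ⟨v, fun i hi => ?_, ?_⟩
    · rcases Finset.mem_insert.1 hi with rfl | hi
      · exact hvu i hi₀ ▸ huU
      · exact (hvs i hi).1
    rw [Finset.coe_insert]
    have hu0 : v i₀ ≠ 0 := hvu i₀ hi₀ ▸ fun h => hut₀ (h ▸ zero_mem _)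
    refine linearIndepOn_insert_of_mkQ (by simpa using hi₀) hu0 ?_
    rw [hvu i₀ hi₀]
    exact hw.congr fun i hi => ((hvs i hi).2).symm

end Rado

theorem exists_basis_le_span_image_ne {K V : Type*} [Field K] [AddCommGroup V] [Module K V]
    [FiniteDimensional K V] {n : ℕ} (hn : finrank K V = n) (S : Fin n → Submodule K V)
    (hS : ∀ I : Finset (Fin n), finrank K ↥(I.inf S) + I.card ≤ n) :
    ∃ b : Basis (Fin n) K V, ∀ i, S i ≤ span K (b '' {j | j ≠ i}) := by
  obtain ⟨w, hwS, hw⟩ := exists_linearIndepOn_mem_of_card_le_finrank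
    (fun i => (S i).dualAnnihilator) Finset.univ fun t _ => by
      rw [← dualAnnihilator_finset_inf]
      have := Subspace.finrank_add_finrank_dualAnnihilator_eq (t.inf S)
      have := hS t
      omega
  rw [Finset.coe_univ, linearIndepOn_univ_iff] at hw
  let Φ := basisOfLinearIndependentOfCardEqFinrank' w hw (by simp [hn])
  let b := Φ.dualBasis.map (Module.evalEquiv K V).symm
  have hb : ∀ x i, b.repr x i = w i x := fun x i => by simp [b, Φ]
  refine ⟨b, fun i x hx => (b.mem_span_image).2 fun j hj => ?_⟩
  rintro rfl
  rw [Finset.mem_coe, Finsupp.mem_support_iff, hb] at hj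
  exact hj ((Submodule.mem_dualAnnihilator _).1 (hwS j (Finset.mem_univ j)) x hx)

section LinearAlgebra

variable {K V : Type*} [Field K] [AddCommGroup V] [Module K V]

theorem finrank_sup_span_singleton_of_notMem {W : Submodule K V} [FiniteDimensional K W] {v : V}
    (hv : v ∉ W) : finrank K ↥(W ⊔ K ∙ v) = finrank K W + 1 := by
  have := Submodule.finrank_sup_add_finrank_inf_eq W (K ∙ v)
  rwa [(Submodule.disjoint_span_singleton_of_notMem hv).eq_bot, finrank_bot,
    finrank_span_singleton (show v ≠ 0 from fun h => hv (h ▸ W.zero_mem)), add_zero] at this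

theorem finrank_inf_ker_add_one {W : Submodule K V} [FiniteDimensional K W] {ψ : Module.Dual K V}
    {w : V} (hw : w ∈ W) (hψ : ψ w ≠ 0) : finrank K ↥(W ⊓ LinearMap.ker ψ) + 1 = finrank K W := by
  have := Module.Dual.finrank_ker_add_one_of_ne_zero (f := ψ.domRestrict W)
    fun h => hψ (LinearMap.congr_fun h ⟨w, hw⟩)
  rwa [LinearMap.ker_domRestrict, ← Submodule.finrank_map_subtype_eq,
    Submodule.map_comap_subtype] at this

theorem LinearIndependent.eq_zero_of_forall_mem_span_image_ne {ι : Type*} [Nonempty ι]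
    {b : ι → V} (hb : LinearIndependent K b) {x : V}
    (hx : ∀ i, x ∈ span K (b '' {j | j ≠ i})) : x = 0 := by
  obtain ⟨i₀⟩ := ‹Nonempty ι›
  obtain ⟨l, -, rfl⟩ := (Finsupp.mem_span_image_iff_linearCombination K).1 (hx i₀)
  suffices l = 0 by rw [this, map_zero]
  ext i
  obtain ⟨l', hl', hl'l⟩ := (Finsupp.mem_span_image_iff_linearCombination K).1 (hx i)
  rw [← hb.finsuppLinearCombination_injective hl'l]
  exact Finsupp.notMem_support_iff.1 fun h => hl' h rfl

end LinearAlgebra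

section Matching

variable {K L : Type*} [Field K] [DivisionRing L] [Algebra K L]

theorem isLinBasis_coe {A : Submodule K L} {n : ℕ} (b : Basis (Fin n) K A) :
    IsLinBasis K (fun i => (b i : L)) A := by
  refine ⟨b.linearIndependent.map' A.subtype A.ker_subtype, ?_⟩
  change span K (Set.range (A.subtype ∘ b)) = A
  rw [Set.range_comp, Submodule.span_image, b.span_eq, Submodule.map_subtype_top]

theorem finrank_add_finrank_le_of_mul_le
    (hK : ∀ M : Subalgebra K L, FiniteDimensional K M → M = ⊥ ∨ M = ⊤)
    {A W T : Submodule K L} [FiniteDimensional K A] [FiniteDimensional K W] [FiniteDimensional K T]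
    (hA : A ≠ ⊤) (hW : W ≠ ⊥) (hWA : W ≤ A) (hWT : W * T ≤ A) (hT : (1 : L) ∉ T) :
    finrank K W + finrank K T ≤ finrank K A := by
  have hWS : W * (T ⊔ K ∙ 1) ≤ A := by
    rw [Submodule.mul_sup, ← Submodule.one_eq_span, mul_one]
    exact sup_le hWT hWA
  have := finrank_add_finrank_le_finrank_mul_add_one hK
    (Submodule.mem_sup_right (Submodule.mem_span_singleton_self 1)) hW (ne_top_of_le_ne_top hA hWS)
  have := finrank_sup_span_singleton_of_notMem hT
  have := Submodule.finrank_mono hWS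
  omega

theorem card_add_finrank_le_finrank_of_mul_mem
    (hK : ∀ M : Subalgebra K L, FiniteDimensional K M → M = ⊥ ∨ M = ⊤)
    {A T : Submodule K L} [FiniteDimensional K A] [FiniteDimensional K T] (hA : A ≠ ⊤)
    (hT : (1 : L) ∉ T) {ι : Type*} {a : ι → L} (ha : LinearIndependent K a) (haA : ∀ i, a i ∈ A)
    {I : Finset ι} (hI : I.Nonempty) (haT : ∀ i ∈ I, ∀ t ∈ T, a i * t ∈ A) :
    I.card + finrank K T ≤ finrank K A := by
  have : FiniteDimensional K ↥(span K (a '' I)) :=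
    FiniteDimensional.span_of_finite K (I.finite_toSet.image a)
  have hW : finrank K ↥(span K (a '' I)) = I.card := by
    have := finrank_span_eq_card (ha.comp ((↑) : I → ι) Subtype.val_injective)
    rwa [Set.range_comp, Subtype.range_coe_subtype, Finset.setOfPred_mem, Fintype.card_coe] at this
  have hWA : span K (a '' I) ≤ A := span_le.2 (Set.image_subset_iff.2 fun i _ => haA i)
  have hWT : span K (a '' I) * T ≤ A := by
    rw [← span_eq T, span_mul_span, span_le]
    rintro _ ⟨_, ⟨i, hi, rfl⟩, t, ht, rfl⟩
    exact haT i hi t ht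
  have hW0 : span K (a '' I) ≠ ⊥ := fun h => by
    rw [h, finrank_bot] at hW
    exact hI.card_ne_zero hW.symm
  have := finrank_add_finrank_le_of_mul_le hK hA hW0 hWA hWT hT
  omega

theorem linearMatchingProperty_of_forall_subalgebra
    (hK : ∀ M : Subalgebra K L, FiniteDimensional K M → M = ⊥ ∨ M = ⊤) :
    LinearMatchingProperty K L := by
  intro n hn A B hA hB h1B m a ha
  have : FiniteDimensional K A := .of_finrank_pos (by omega)
  have : FiniteDimensional K B := .of_finrank_pos (by omega)
  obtain rfl : m = n := by
    rw [← hA, ← ha.2, finrank_span_eq_card ha.1, Fintype.card_fin]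
  have hAtop : A ≠ ⊤ := by
    rintro rfl
    have : FiniteDimensional K L := Module.Finite.equiv Submodule.topEquiv
    rw [finrank_top] at hA
    exact h1B (Submodule.eq_top_of_finrank_eq (hB.trans hA.symm) ▸ mem_top)
  have haA : ∀ i, a i ∈ A := fun i => ha.2 ▸ subset_span (Set.mem_range_self i)
  let S : Fin m → Submodule K B := fun i => (A.comap (LinearMap.mulLeft K (a i))).comap B.subtype
  obtain ⟨b, hb⟩ := exists_basis_le_span_image_ne hB S fun I => by
    rcases I.eq_empty_or_nonempty with rfl | hI
    · rw [Finset.inf_empty, finrank_top, hB, Finset.card_empty, add_zero]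
    have := card_add_finrank_le_finrank_of_mul_mem hK hAtop (T := (I.inf S).map B.subtype)
      (fun ⟨y, _, hy⟩ => h1B (hy ▸ y.2)) ha.1 haA hI
      fun i hi _ ⟨y, hy, hyt⟩ => hyt ▸ Submodule.mem_finsetInf.1 hy i hi
    rw [Submodule.finrank_map_subtype_eq] at this
    omega
  refine ⟨fun i => b i, isLinBasis_coe b, fun i x hxB hx => ?_⟩
  have := Submodule.mem_map_of_mem (f := B.subtype) (hb i (show ⟨x, hxB⟩ ∈ S i from hx))
  rwa [Submodule.map_span, ← Set.image_comp] at this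

theorem eq_bot_or_eq_top_of_linearMatchingProperty (hL : LinearMatchingProperty K L)
    (M : Subalgebra K L) [FiniteDimensional K M] : M = ⊥ ∨ M = ⊤ := by
  by_contra! hM
  set P := Subalgebra.toSubmodule M
  have : FiniteDimensional K P := ‹_›
  have hn : 2 ≤ finrank K P := by
    rw [Subalgebra.finrank_toSubmodule]
    have : 0 < finrank K M := Module.finrank_pos
    have := Subalgebra.finrank_eq_one_iff.not.2 hM.1
    omega
  obtain ⟨z, hz⟩ : ∃ z, z ∉ M := by
    by_contra! h
    exact hM.2 (eq_top_iff.2 fun x _ => h x)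
  obtain ⟨ψ, hψ⟩ := Module.Projective.exists_dual_ne_zero K (one_ne_zero : (1 : L) ≠ 0)
  have hPker := finrank_inf_ker_add_one M.one_mem hψ (W := P)
  have hB : finrank K ↥((P ⊔ K ∙ z) ⊓ LinearMap.ker ψ) = finrank K P := by
    have := finrank_inf_ker_add_one (Submodule.mem_sup_left M.one_mem) hψ (W := P ⊔ K ∙ z)
    have := finrank_sup_span_singleton_of_notMem hz (W := P)
    omega
  obtain ⟨b, hb, hmatch⟩ := hL _ (by omega) P _ rfl hB (fun h => hψ h.2) _ _
    (isLinBasis_coe (Module.finBasis K P))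
  obtain ⟨x, hx, hx0⟩ :=
    Submodule.exists_mem_ne_zero_of_ne_bot fun h : P ⊓ LinearMap.ker ψ = ⊥ => by
      rw [h, finrank_bot] at hPker
      omega
  have : Nonempty (Fin (finrank K P)) := ⟨⟨0, by omega⟩⟩
  exact hx0 (hb.1.eq_zero_of_forall_mem_span_image_ne fun i =>
    hmatch i x ⟨mem_sup_left hx.1, hx.2⟩ (M.mul_mem (Module.finBasis K P i).2 hx.1))

end Matching

/-- `L` has the linear matching property over `K` iff every intermediate sub-division-ring
`K ⊆ M ⊆ L` (a subalgebra closed under inverses) which is finite-dimensional over `K`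
equals `K` or `L`. -/
theorem linearMatchingProperty_iff {K L : Type*} [Field K] [DivisionRing L] [Algebra K L] :
    LinearMatchingProperty K L ↔
      ∀ M : Subalgebra K L, (∀ x ∈ M, x⁻¹ ∈ M) → FiniteDimensional K M →
        (M = ⊥ ∨ M = ⊤) :=
  ⟨fun hL M _ _ => eq_bot_or_eq_top_of_linearMatchingProperty hL M,
    fun h => linearMatchingProperty_of_forall_subalgebra fun M _ =>
      h M (fun _ hx => Algebra.IsIntegral.inv_mem hx) ‹_›⟩
end

section
/- Let A, B be n-dimensional K-subspaces of L with 1 ∉ B. If every intermediate sub-division-ring M with K ⊊ M ⊆ L satisfies dim_K M > n, then A is matched to B. -/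
/-!
For a basis `a` of `A` let `Bᵢ = {x ∈ B | aᵢ x ∈ A}`. A basis of `B` is matched to `a` exactly
when its `i`-th coordinate functional vanishes on `Bᵢ`, so by Rado's theorem on independent
transversals, applied to the annihilators of the `Bᵢ` in the dual of `B`, it suffices that
`dim ⋂_{i ∈ S} Bᵢ + |S| ≤ n` for every nonempty `S`. For `V = span {aᵢ | i ∈ S}` and
`W = K + ⋂_{i ∈ S} Bᵢ` the product `VW` lies in `A`, so this follows from the linear
Cauchy–Davenport inequality `dim V + dim W ≤ dim VW + 1` (for `1 ∈ W` and `dim VW ≤ n`).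
That inequality is proved with Dyson `e`-transforms; the hypothesis on intermediate division
rings makes the left stabilizer of every nonzero subspace of dimension `≤ n` equal to `K`,
which is what forces each transform to make progress.
-/

open Module Submodule Finset

instance Submodule.finite_mul {R A : Type*} [CommSemiring R] [Semiring A] [Algebra R A]
    (M N : Submodule R A) [Module.Finite R M] [Module.Finite R N] : Module.Finite R ↥(M * N) :=
  Module.Finite.iff_fg.mpr ((Module.Finite.iff_fg.mp ‹_›).mul (Module.Finite.iff_fg.mp ‹_›))

section Rado

variable {K V ι : Type*} [DivisionRing K] [AddCommGroup V] [Module K V]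

lemma finrank_inf_add_finrank_sup_of_finrank_eq {X Y : Submodule K V} [FiniteDimensional K X]
    [FiniteDimensional K Y] (h : finrank K Y = finrank K X) :
    finrank K ↥(X ⊓ Y) + finrank K ↥(X ⊔ Y) = 2 * finrank K X := by
  have := finrank_sup_add_finrank_inf_eq X Y
  omega

lemma Submodule.map_finset_sup {W : Type*} [AddCommGroup W] [Module K W] (f : V →ₗ[K] W)
    (s : Finset ι) (U : ι → Submodule K V) : (s.sup U).map f = s.sup fun i => (U i).map f :=
  apply_sup_eq_sup_comp _ (fun _ _ => Submodule.map_sup _ _ _) (map_bot _)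

lemma finrank_map_mkQ_add_finrank [FiniteDimensional K V] (X Y : Submodule K V) :
    finrank K (Y.map X.mkQ) + finrank K X = finrank K ↥(Y ⊔ X) := by
  have hrange : LinearMap.range (X.mkQ.domRestrict (Y ⊔ X)) = Y.map X.mkQ := by
    rw [LinearMap.range_domRestrict, Submodule.map_sup, mkQ_map_self, sup_bot_eq]
  have hker : finrank K (LinearMap.ker (X.mkQ.domRestrict (Y ⊔ X))) = finrank K X := by
    rw [LinearMap.ker_domRestrict, ker_mkQ]
    exact (comapSubtypeEquivOfLe le_sup_right).finrank_eq
  rw [← hrange, ← hker]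
  exact LinearMap.finrank_range_add_finrank_ker _

lemma exists_linearIndepOn_union {U : ι → Submodule K V} {S T : Set ι} (hST : Disjoint S T)
    (X : Submodule K V) {f : ι → V} (hfU : ∀ i ∈ S, f i ∈ U i ⊓ X) (hf : LinearIndepOn K f S)
    {g : ι → V ⧸ X} (hgU : ∀ i ∈ T, g i ∈ (U i).map X.mkQ) (hg : LinearIndepOn K g T) :
    ∃ h : ι → V, (∀ i ∈ S ∪ T, h i ∈ U i) ∧ LinearIndepOn K h (S ∪ T) := by
  classical
  choose! g' hg'U hg'g using fun i hi => mem_map.mp (hgU i hi)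
  have hgS : ∀ i ∈ T, i ∉ S := fun i hi hiS => hST.ne_of_mem hiS hi rfl
  refine ⟨S.piecewise f g', ?_, ?_⟩
  · rintro i (hi | hi)
    · simpa [hi] using (hfU i hi).1
    · simpa [hgS i hi] using hg'U i hi
  have hspan : span K (S.piecewise f g' '' S) ≤ X := by
    rw [span_le]
    rintro _ ⟨i, hi, rfl⟩
    simpa [hi] using (hfU i hi).2
  refine (hf.congr fun i hi => by simp [hi]).union_of_quotient ?_
  refine .of_comp ((span K (S.piecewise f g' '' S)).mapQ X LinearMap.id hspan) ?_
  refine hg.congr fun i hi => ?_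
  simp [hgS i hi, ← hg'g i hi]

theorem exists_linearIndepOn_of_card_le_finrank_sup [FiniteDimensional K V]
    (U : ι → Submodule K V) (s : Finset ι) (h : ∀ t ⊆ s, #t ≤ finrank K ↥(t.sup U)) :
    ∃ f : ι → V, (∀ i ∈ s, f i ∈ U i) ∧ LinearIndepOn K f s := by
  classical
  induction s using Finset.strongInduction generalizing V with
  | H s ih =>
  rcases s.eq_empty_or_nonempty with rfl | ⟨i₀, hi₀⟩
  · exact ⟨0, by simp, by simp⟩
  /- A critical `t` (one whose subspaces span exactly `#t` dimensions) splits the problem into `t`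
  and `s \ t` modulo the span of `t`. Without one, any nonzero `x ∈ U i₀` can be chosen, since
  factoring out `K ∙ x` costs every other nonempty subfamily at most the one spare dimension. -/
  by_cases hcrit : ∃ t ⊂ s, t.Nonempty ∧ finrank K ↥(t.sup U) ≤ #t
  · obtain ⟨t, hts, htne, htU⟩ := hcrit
    obtain ⟨f, hfU, hf⟩ := ih t hts U fun r hr => h r (hr.trans hts.subset)
    obtain ⟨g, hgU, hg⟩ := ih (s \ t) (sdiff_ssubset hts.subset htne)
      (fun i => (U i).map (t.sup U).mkQ) fun r hr => by
        have hrt : Disjoint r t := disjoint_of_subset_left hr sdiff_disjoint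
        have hrt_le := h (r ∪ t) (union_subset (hr.trans sdiff_subset) hts.subset)
        rw [sup_union, card_union_of_disjoint hrt, ← finrank_map_mkQ_add_finrank] at hrt_le
        rw [← Submodule.map_finset_sup]
        omega
    have := exists_linearIndepOn_union Set.disjoint_sdiff_right (t.sup U)
      (fun i hi => ⟨hfU i hi, le_sup (f := U) hi (hfU i hi)⟩) hf
      (fun i hi => hgU i (by rwa [← coe_sdiff] at hi)) (by rwa [coe_sdiff] at hg)
    rwa [Set.union_sdiff_cancel (coe_subset.mpr hts.subset)] at this
  · push Not at hcrit
    obtain ⟨x, hxU, hx0⟩ : ∃ x ∈ U i₀, x ≠ 0 := by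
      refine (Submodule.ne_bot_iff _).mp fun hbot => ?_
      simpa [hbot] using h {i₀} (singleton_subset_iff.mpr hi₀)
    obtain ⟨g, hgU, hg⟩ := ih (s.erase i₀) (erase_ssubset hi₀)
      (fun i => (U i).map (span K {x}).mkQ) fun r hr => by
        rcases r.eq_empty_or_nonempty with rfl | hr0
        · simp
        have hr_lt := hcrit r (hr.trans_ssubset (erase_ssubset hi₀)) hr0
        have hquot := finrank_map_mkQ_add_finrank (span K {x}) (r.sup U)
        have hsup := finrank_mono (le_sup_left : r.sup U ≤ r.sup U ⊔ span K {x})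
        rw [finrank_span_singleton hx0] at hquot
        rw [← Submodule.map_finset_sup]
        omega
    have := exists_linearIndepOn_union (S := {i₀}) (by simp) (span K {x}) (f := fun _ => x)
      (by rintro i rfl; exact ⟨hxU, mem_span_singleton_self x⟩)
      ((linearIndepOn_singleton_iff K).mpr hx0) hgU hg
    rwa [Set.singleton_union, ← coe_insert, insert_erase hi₀] at this

end Rado

section Dual

variable {K V ι : Type*} [Field K] [AddCommGroup V] [Module K V]

theorem exists_basis_coord_eq_zero_of_finrank_inf_add_card_le [FiniteDimensional K V]
    [Fintype ι] (hι : Fintype.card ι = finrank K V) (H : ι → Submodule K V)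
    (hH : ∀ S : Finset ι, S.Nonempty → finrank K ↥(S.inf H) + #S ≤ finrank K V) :
    ∃ b : Basis ι K V, ∀ i, ∀ x ∈ H i, b.coord i x = 0 := by
  classical
  have hann (S : Finset ι) :
      (S.inf H).dualAnnihilator = S.sup fun i => (H i).dualAnnihilator := by
    induction S using Finset.induction_on with
    | empty => simp
    | insert i S _ ih => rw [inf_insert, sup_insert, Subspace.dualAnnihilator_inf_eq, ih]
  obtain ⟨f, hfH, hf⟩ := exists_linearIndepOn_of_card_le_finrank_sup
    (fun i => (H i).dualAnnihilator) univ fun S _ => by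
      rcases S.eq_empty_or_nonempty with rfl | hS
      · simp
      have hdual := Subspace.finrank_add_finrank_dualAnnihilator_eq (S.inf H)
      have hS_le := hH S hS
      rw [← hann]
      omega
  let bF : Basis ι K (Dual K V) := basisOfLinearIndependentOfCardEqFinrank' f
    (by simpa using hf) (by rw [Subspace.dual_finrank_eq, hι])
  refine ⟨bF.dualBasis.map (evalEquiv K V).symm, fun i x hx => ?_⟩
  simpa [bF] using (mem_dualAnnihilator _).mp (hfH i (mem_univ i)) x hx

end Dual

def leftStabilizer {K L : Type*} [CommSemiring K] [Semiring L] [Algebra K L]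
    (W : Submodule K L) : Subalgebra K L where
  carrier := {x | ∀ w ∈ W, x * w ∈ W}
  mul_mem' hx hy w hw := by simpa only [mul_assoc] using hx _ (hy w hw)
  add_mem' hx hy w hw := by simpa only [add_mul] using W.add_mem (hx w hw) (hy w hw)
  algebraMap_mem' k w hw := by simpa only [Algebra.smul_def] using W.smul_mem k hw

section DivisionRing

variable {K L : Type*} [Field K] [DivisionRing L] [Algebra K L]

lemma span_singleton_mul_eq_map (W : Submodule K L) (e : L) :
    span K {e} * W = W.map (LinearMap.mulLeft K e) := by
  ext x
  simp [mem_span_singleton_mul]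

lemma mul_span_singleton_eq_map (V : Submodule K L) (e : L) :
    V * span K {e} = V.map (LinearMap.mulRight K e) := by
  ext x
  simp [mem_mul_span_singleton]

lemma finrank_span_singleton_mul (W : Submodule K L) {e : L} (he : e ≠ 0) :
    finrank K ↥(span K {e} * W) = finrank K W := by
  rw [span_singleton_mul_eq_map]
  exact (equivMapOfInjective _ (mul_right_injective₀ he) W).finrank_eq.symm

lemma finrank_mul_span_singleton (V : Submodule K L) {e : L} (he : e ≠ 0) :
    finrank K ↥(V * span K {e}) = finrank K V := by
  rw [mul_span_singleton_eq_map]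
  exact (equivMapOfInjective _ (mul_left_injective₀ he) V).finrank_eq.symm

lemma mul_span_singleton_mul_span_singleton_inv_mul (V W : Submodule K L) {e : L} (he : e ≠ 0) :
    V * span K {e} * (span K {e⁻¹} * W) = V * W := by
  rw [mul_assoc, ← mul_assoc (span K {e}), span_mul_span, Set.singleton_mul_singleton,
    mul_inv_cancel₀ he, ← one_eq_span, one_mul]

lemma inf_mul_sup_le_mul (V W : Submodule K L) {e : L} (he : e ≠ 0) :
    (V ⊓ V * span K {e}) * (W ⊔ span K {e⁻¹} * W) ≤ V * W := by
  rw [Submodule.mul_sup]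
  exact sup_le (mul_le_mul' inf_le_left le_rfl)
    ((mul_le_mul' inf_le_right le_rfl).trans
      (mul_span_singleton_mul_span_singleton_inv_mul V W he).le)

lemma sup_mul_inf_le_mul (V W : Submodule K L) {e : L} (he : e ≠ 0) :
    (V ⊔ V * span K {e}) * (W ⊓ span K {e⁻¹} * W) ≤ V * W := by
  rw [Submodule.sup_mul]
  exact sup_le (mul_le_mul' le_rfl inf_le_left)
    ((mul_le_mul' le_rfl inf_le_right).trans
      (mul_span_singleton_mul_span_singleton_inv_mul V W he).le)

lemma inv_mem_leftStabilizer {W : Submodule K L} [FiniteDimensional K W] {x : L}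
    (hx : x ∈ leftStabilizer W) : x⁻¹ ∈ leftStabilizer W := by
  rcases eq_or_ne x 0 with rfl | hx0
  · simp
  have hxW : span K {x} * W ≤ W := by
    rw [span_singleton_mul_eq_map, map_le_iff_le_comap]
    exact hx
  have hxW_eq : span K {x} * W = W := eq_of_le_of_finrank_eq hxW (finrank_span_singleton_mul W hx0)
  intro w hw
  obtain ⟨z, hz, rfl⟩ := mem_span_singleton_mul.mp (hxW_eq.symm ▸ hw)
  simpa [inv_mul_cancel_left₀ hx0] using hz

lemma rank_leftStabilizer_le {W : Submodule K L} [FiniteDimensional K W] (hW : W ≠ ⊥) :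
    Module.rank K (leftStabilizer W) ≤ finrank K W := by
  obtain ⟨w, hw, hw0⟩ := exists_mem_ne_zero_of_ne_bot hW
  let φ := (LinearMap.mulRight K w).restrict (p := Subalgebra.toSubmodule (leftStabilizer W))
    (q := W) fun x hx => hx w hw
  have hφ : Function.Injective φ := fun x y hxy =>
    Subtype.ext (mul_left_injective₀ hw0 (congrArg Subtype.val hxy))
  rw [← Subalgebra.rank_toSubmodule, finrank_eq_rank]
  exact LinearMap.rank_le_of_injective φ hφ

lemma leftStabilizer_eq_bot {n : ℕ}
    (hM : ∀ M : Subalgebra K L, (∀ x ∈ M, x⁻¹ ∈ M) → M ≠ ⊥ → (n : Cardinal) < Module.rank K M)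
    {W : Submodule K L} [FiniteDimensional K W] (hW : W ≠ ⊥) (hWn : finrank K W ≤ n) :
    leftStabilizer W = ⊥ := by
  by_contra hne
  have := (hM _ (fun _ => inv_mem_leftStabilizer) hne).trans_le (rank_leftStabilizer_le hW)
  exact (Nat.cast_lt.mp this).not_ge hWn

lemma finrank_inf_span_singleton_inv_mul_lt {W : Submodule K L} [FiniteDimensional K W] {e : L}
    (he : e ∉ leftStabilizer W) : finrank K ↥(W ⊓ span K {e⁻¹} * W) < finrank K W := by
  have he0 : e ≠ 0 := fun h => he (h ▸ zero_mem _)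
  refine (finrank_mono inf_le_left).lt_of_ne fun heq => he fun w hw => ?_
  have hw' : w ∈ W ⊓ span K {e⁻¹} * W := (eq_of_le_of_finrank_eq inf_le_left heq).symm ▸ hw
  obtain ⟨z, hz, rfl⟩ := mem_span_singleton_mul.mp hw'.2
  simpa [mul_inv_cancel_left₀ he0] using hz

lemma finrank_le_finrank_mul_of_one_mem (V : Submodule K L) {W : Submodule K L}
    [FiniteDimensional K V] [FiniteDimensional K W] (hW : (1 : L) ∈ W) :
    finrank K V ≤ finrank K ↥(V * W) :=
  finrank_mono (by simpa using mul_le_mul' le_rfl (one_le.mpr hW))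

lemma finrank_le_finrank_mul_of_mem {V : Submodule K L} (W : Submodule K L)
    [FiniteDimensional K V] [FiniteDimensional K W] {v : L} (hvV : v ∈ V) (hv0 : v ≠ 0) :
    finrank K W ≤ finrank K ↥(V * W) := by
  rw [← finrank_span_singleton_mul W hv0]
  exact finrank_mono (mul_le_mul' (span_singleton_le_iff_mem _ _ |>.mpr hvV) le_rfl)

lemma finrank_add_finrank_le_of_inf_span_singleton_mul_le {V W : Submodule K L}
    [FiniteDimensional K V] [FiniteDimensional K W] (hW : (1 : L) ∈ W) {v : L} (hvV : v ∈ V)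
    (hv0 : v ≠ 0) (hinf : V ⊓ span K {v} * W ≤ span K {v}) :
    finrank K V + finrank K W ≤ finrank K ↥(V * W) + 1 := by
  have hsup : V ⊔ span K {v} * W ≤ V * W :=
    sup_le (by simpa using mul_le_mul' le_rfl (one_le.mpr hW))
      (mul_le_mul' (span_singleton_le_iff_mem _ _ |>.mpr hvV) le_rfl)
  have hsum := finrank_sup_add_finrank_inf_eq V (span K {v} * W)
  have hinf_le := finrank_mono hinf
  rw [finrank_span_singleton_mul W hv0] at hsum
  rw [finrank_span_singleton hv0] at hinf_le
  have hsup_le := finrank_mono hsup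
  omega

theorem finrank_add_finrank_le_finrank_mul_add_one_s14 {n : ℕ}
    (hM : ∀ M : Subalgebra K L, (∀ x ∈ M, x⁻¹ ∈ M) → M ≠ ⊥ → (n : Cardinal) < Module.rank K M)
    (V W : Submodule K L) [FiniteDimensional K V] [FiniteDimensional K W] (hV : V ≠ ⊥)
    (hW : (1 : L) ∈ W) (hVW : finrank K ↥(V * W) ≤ n) :
    finrank K V + finrank K W ≤ finrank K ↥(V * W) + 1 := by
  obtain ⟨v, hvV, hv0⟩ := exists_mem_ne_zero_of_ne_bot hV
  by_cases hK : ∀ e ∈ W, v * e ∈ V → e ∈ (⊥ : Subalgebra K L)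
  · refine finrank_add_finrank_le_of_inf_span_singleton_mul_le hW hvV hv0 ?_
    rintro x ⟨hxV, hxvW⟩
    obtain ⟨z, hzW, rfl⟩ := mem_span_singleton_mul.mp hxvW
    obtain ⟨k, rfl⟩ := hK z hzW hxV
    exact mem_span_singleton.mpr ⟨k, Algebra.commutes k v ▸ Algebra.smul_def k v⟩
  /- Otherwise apply the `e`-transforms `(V ⊓ Ve, W ⊔ e⁻¹W)` and `(V ⊔ Ve, W ⊓ e⁻¹W)`: both
  products stay inside `VW`, their dimension sums average to `dim V + dim W`, and
  `W ⊓ e⁻¹W ⊊ W` because `e ∉ K` is not in the left stabilizer of `W`. -/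
  push Not at hK
  obtain ⟨e, heW, hveV, heK⟩ := hK
  have he0 : e ≠ 0 := fun h => heK (h ▸ zero_mem _)
  have hve : v * e ∈ V ⊓ V * span K {e} := ⟨hveV, mem_mul_span_singleton.mpr ⟨v, hvV, rfl⟩⟩
  have hve0 : v * e ≠ 0 := mul_ne_zero hv0 he0
  have hW₂ : (1 : L) ∈ W ⊓ span K {e⁻¹} * W :=
    ⟨hW, mem_span_singleton_mul.mpr ⟨e, heW, inv_mul_cancel₀ he0⟩⟩
  have hVn := finrank_le_finrank_mul_of_one_mem V hW
  have hWn := finrank_le_finrank_mul_of_mem W hvV hv0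
  have hV₁₂ := finrank_inf_add_finrank_sup_of_finrank_eq (finrank_mul_span_singleton V he0)
  have hW₁₂ := finrank_inf_add_finrank_sup_of_finrank_eq
    (finrank_span_singleton_mul W (inv_ne_zero he0))
  have hW₂_lt : finrank K ↥(W ⊓ span K {e⁻¹} * W) < finrank K W := by
    refine finrank_inf_span_singleton_inv_mul_lt fun he => heK ?_
    rwa [← leftStabilizer_eq_bot hM ((Submodule.ne_bot_iff W).mpr ⟨1, hW, one_ne_zero⟩)
      (hWn.trans hVW)]
  have hP₁ := finrank_mono (inf_mul_sup_le_mul V W he0)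
  have hP₂ := finrank_mono (sup_mul_inf_le_mul V W he0)
  have hW₁n := (finrank_le_finrank_mul_of_mem (W ⊔ span K {e⁻¹} * W) hve hve0).trans hP₁
  rcases le_or_gt (finrank K V + finrank K W)
      (finrank K ↥(V ⊔ V * span K {e}) + finrank K ↥(W ⊓ span K {e⁻¹} * W)) with h | h
  · have := finrank_add_finrank_le_finrank_mul_add_one_s14 hM (V ⊔ V * span K {e})
      (W ⊓ span K {e⁻¹} * W) ((Submodule.ne_bot_iff _).mpr ⟨v, mem_sup_left hvV, hv0⟩) hW₂
      (hP₂.trans hVW)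
    omega
  · have := finrank_add_finrank_le_finrank_mul_add_one_s14 hM (V ⊓ V * span K {e})
      (W ⊔ span K {e⁻¹} * W) ((Submodule.ne_bot_iff _).mpr ⟨_, hve, hve0⟩) (mem_sup_left hW)
      (hP₁.trans hVW)
    omega
termination_by (2 * n - (finrank K V + finrank K W), finrank K W)
decreasing_by
  all_goals
    simp only [Prod.lex_def]
    omega

theorem finrank_add_finrank_le_of_mul_le_s14 {n : ℕ}
    (hM : ∀ M : Subalgebra K L, (∀ x ∈ M, x⁻¹ ∈ M) → M ≠ ⊥ → (n : Cardinal) < Module.rank K M)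
    {A V W : Submodule K L} [FiniteDimensional K A] [FiniteDimensional K V]
    [FiniteDimensional K W] (hAn : finrank K A ≤ n) (hV : V ≠ ⊥) (hVA : V ≤ A)
    (hW : (1 : L) ∉ W) (hVW : V * W ≤ A) :
    finrank K V + finrank K W ≤ finrank K A := by
  have hVW' : V * (span K {1} ⊔ W) ≤ A := by
    rw [Submodule.mul_sup, ← one_eq_span, mul_one]
    exact sup_le hVA hVW
  have h1W : finrank K ↥(span K {(1 : L)} ⊔ W) = finrank K W + 1 := by
    have hsum := finrank_sup_add_finrank_inf_eq (span K {(1 : L)}) W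
    rw [((disjoint_span_singleton' one_ne_zero).mpr hW).symm.eq_bot, finrank_bot,
      finrank_span_singleton one_ne_zero] at hsum
    omega
  have hCD := finrank_add_finrank_le_finrank_mul_add_one_s14 hM V (span K {1} ⊔ W) hV
    (mem_sup_left (mem_span_singleton_self 1)) ((finrank_mono hVW').trans hAn)
  have hVW_le := finrank_mono hVW'
  omega

theorem finrank_inf_comap_mulLeft_add_card_le {n : ℕ}
    (hM : ∀ M : Subalgebra K L, (∀ x ∈ M, x⁻¹ ∈ M) → M ≠ ⊥ → (n : Cardinal) < Module.rank K M)
    {ι : Type*} {A B : Submodule K L} [FiniteDimensional K A] [FiniteDimensional K B]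
    (hAn : finrank K A ≤ n) (hB : (1 : L) ∉ B) {a : ι → L} (ha : LinearIndependent K a)
    (haA : ∀ i, a i ∈ A) {S : Finset ι} (hS : S.Nonempty) :
    finrank K ↥(S.inf fun i => (A.comap (LinearMap.mulLeft K (a i))).comap B.subtype) + #S ≤
      finrank K A := by
  classical
  set H := S.inf fun i => (A.comap (LinearMap.mulLeft K (a i))).comap B.subtype
  obtain ⟨i₀, hi₀⟩ := hS
  have hW : (1 : L) ∉ H.map B.subtype := fun h => hB (by
    obtain ⟨x, -, hx⟩ := mem_map.mp h
    exact hx ▸ x.2)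
  have hVA : span K (S.image a : Set L) ≤ A := span_le.mpr fun _ hv => by
    obtain ⟨i, -, rfl⟩ := mem_image.mp hv
    exact haA i
  have hVW : span K (S.image a : Set L) * H.map B.subtype ≤ A := by
    refine mul_le.mpr fun v hv _ hw => ?_
    obtain ⟨x, hx, rfl⟩ := mem_map.mp hw
    refine (span_le (p := A.comap (LinearMap.mulRight K (x : L))).mpr fun _ hy => ?_) hv
    obtain ⟨i, hi, rfl⟩ := mem_image.mp hy
    exact Finset.inf_le (f := fun i => (A.comap (LinearMap.mulLeft K (a i))).comap B.subtype)
      hi hx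
  have hV : finrank K ↥(span K (S.image a : Set L)) = #S := by
    rw [finrank_span_finset_eq_card (by rw [coe_image]; exact (ha.linearIndepOn _).id_image),
      card_image_of_injective _ ha.injective]
  have hV0 : span K (S.image a : Set L) ≠ ⊥ :=
    (Submodule.ne_bot_iff _).mpr ⟨a i₀, subset_span (mem_image_of_mem a hi₀), ha.ne_zero i₀⟩
  have := finrank_add_finrank_le_of_mul_le_s14 hM hAn hV0 hVA hW hVW
  rw [finrank_map_subtype_eq, hV] at this
  omega

lemma isLinBasis_coe_basis {n : ℕ} {B : Submodule K L} (b : Basis (Fin n) K B) :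
    IsLinBasis K (fun i => (b i : L)) B := by
  refine ⟨b.linearIndependent.map' B.subtype B.ker_subtype, ?_⟩
  rw [show Set.range (fun i => (b i : L)) = B.subtype '' Set.range b from Set.range_comp _ _,
    ← map_span, b.span_eq, Submodule.map_top, range_subtype]

lemma matchedBases_coe_basis {n : ℕ} {A B : Submodule K L} {a : Fin n → L}
    (b : Basis (Fin n) K B) (hb : ∀ i, ∀ x : B, a i * x ∈ A → b.coord i x = 0) :
    MatchedBases K a (fun i => (b i : L)) A B := by
  intro i x hxB hx
  have hspan : (⟨x, hxB⟩ : B) ∈ span K (b '' {j | j ≠ i}) :=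
    b.mem_span_image.mpr fun j hj hji => (Finsupp.mem_support_iff.mp hj) (hji ▸ hb i _ hx)
  simpa [map_span, ← Set.image_comp] using mem_map_of_mem (f := B.subtype) hspan

end DivisionRing

theorem matched_of_small_dim_general {K L : Type*} [Field K] [DivisionRing L] [Algebra K L]
    {n : ℕ} (A B : Submodule K L) [FiniteDimensional K B]
    (hA : Module.finrank K A = n) (hB : Module.finrank K B = n)
    (h1 : (1 : L) ∉ B)
    (hM : ∀ M : Subalgebra K L, (∀ x ∈ M, x⁻¹ ∈ M) → M ≠ ⊥ →
      (n : Cardinal) < Module.rank K M) :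
    SubspaceMatched K A B := by
  intro m a ha
  obtain rfl : m = n := by
    have := finrank_span_eq_card ha.1
    rwa [ha.2, hA, Fintype.card_fin, eq_comm] at this
  have : FiniteDimensional K A := ha.2 ▸ FiniteDimensional.span_of_finite K (Set.finite_range a)
  have haA (i : Fin m) : a i ∈ A := ha.2 ▸ subset_span (Set.mem_range_self i)
  obtain ⟨b, hb⟩ := exists_basis_coord_eq_zero_of_finrank_inf_add_card_le (by simp [hB])
    (fun i => (A.comap (LinearMap.mulLeft K (a i))).comap B.subtype) fun S hS =>
      (finrank_inf_comap_mulLeft_add_card_le hM hA.le h1 ha.1 haA hS).trans_eq (hA.trans hB.symm)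
  exact ⟨_, isLinBasis_coe_basis b, matchedBases_coe_basis b hb⟩

/-- If `A, B` are `n`-dimensional `K`-subspaces of `L` with `1 ∉ B`, and every intermediate
sub-division-ring `K ⊊ M ⊆ L` (a subalgebra closed under inverses, other than `K` itself)
has `dim_K M > n`, then `A` is matched to `B`. -/
theorem matched_of_small_dim {K L : Type*} [Field K] [DivisionRing L] [Algebra K L]
    {n : ℕ} (A B : Submodule K L) [FiniteDimensional K A] [FiniteDimensional K B]
    (hA : Module.finrank K A = n) (hB : Module.finrank K B = n)
    (h1 : (1 : L) ∉ B)
    (hM : ∀ M : Subalgebra K L, (∀ x ∈ M, x⁻¹ ∈ M) → M ≠ ⊥ →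
      (n : Cardinal) < Module.rank K M) :
    SubspaceMatched K A B :=
  matched_of_small_dim_general A B hA hB h1 hM
end

section
/- Let A, B be n-dimensional K-subspaces of L (n ≥ 1) and let φ : A → B be a K-linear isomorphism. Then φ is a strong matching from A to B if and only if for every nonzero a ∈ A and every K-subspace H ⊆ A with A = Ka ⊕ H, one has a⁻¹A ∩ B ⊆ φ(H). -/
def IsStrongMatching {K L : Type*} [Field K] [DivisionRing L] [Algebra K L]
    {A B : Submodule K L} (φ : A ≃ₗ[K] B) : Prop :=
  ∀ (n : ℕ) (a : Fin n → A), IsLinBasis K (fun i => (a i : L)) A →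
    MatchedBases K (fun i => (a i : L)) (fun i => (φ (a i) : L)) A B

/-! A basis `a₁, …, aₙ` of `A` singles out, for each `i`, the complement
`Hᵢ = span {aⱼ : j ≠ i}` of `K aᵢ` in `A`, and being matched to `φ(a₁), …, φ(aₙ)` at the
index `i` says exactly `aᵢ⁻¹A ∩ B ⊆ φ(Hᵢ)`. Conversely, every complement `H` of a line `K a`
arises this way: `a` followed by a basis of `H` is a basis of `A`. -/

open Submodule

theorem Fin.cons_image_ne_zero {α : Type*} {m : ℕ} (x : α) (v : Fin m → α) :
    (Fin.cons x v : Fin (m + 1) → α) '' {j | j ≠ 0} = Set.range v := by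
  ext y
  simp [Fin.exists_fin_succ]

section LinearAlgebra

variable {K V ι : Type*} [DivisionRing K] [AddCommGroup V] [Module K V]

theorem span_singleton_sup_span_image_ne (v : ι → V) (i : ι) :
    K ∙ v i ⊔ span K (v '' {j | j ≠ i}) = span K (Set.range v) := by
  rw [← Set.image_singleton, ← span_union, ← Set.image_union, ← Set.image_univ]
  congr
  ext j
  by_cases h : j = i <;> simp [h]

theorem LinearIndependent.disjoint_span_singleton_span_image_ne {v : ι → V}
    (hv : LinearIndependent K v) (i : ι) :
    Disjoint (K ∙ v i) (span K (v '' {j | j ≠ i})) := by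
  simpa using hv.disjoint_span_image (s := {i}) (t := {j | j ≠ i}) (by simp)

theorem exists_linearIndependent_finCons_of_notMem {H : Submodule K V} [FiniteDimensional K H]
    {a : V} (ha : a ∉ H) :
    ∃ (m : ℕ) (v : Fin m → V),
      LinearIndependent K (Fin.cons a v : Fin (m + 1) → V) ∧ span K (Set.range v) = H := by
  let b := Module.finBasis K H
  have hspan : span K (Set.range (H.subtype ∘ b)) = H := by
    rw [Set.range_comp, ← map_span, b.span_eq, Submodule.map_top, range_subtype]
  refine ⟨_, H.subtype ∘ b, ?_, hspan⟩
  exact (b.linearIndependent.map' H.subtype H.ker_subtype).finCons (by rwa [hspan])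

end LinearAlgebra

section StrongMatching

variable {K L : Type*} [Field K] [DivisionRing L] [Algebra K L] {A B : Submodule K L}

/-- `a⁻¹A ∩ B` -/
def invMulInf (a : L) (A B : Submodule K L) : Submodule K L :=
  B ⊓ A.comap (LinearMap.mulLeft K a)

/-- `f(H)` for a subspace `H ⊆ A`, as a subspace of `L` -/
def mapSubspace (f : A →ₗ[K] B) (H : Submodule K L) : Submodule K L :=
  (H.comap A.subtype).map f |>.map B.subtype

theorem mapSubspace_span_image {ι : Type*} (f : A →ₗ[K] B) (c : ι → A) (s : Set ι) :
    mapSubspace f (span K ((fun j => (c j : L)) '' s)) =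
      span K ((fun j => (f (c j) : L)) '' s) := by
  have hc : span K ((fun j => (c j : L)) '' s) = (span K (c '' s)).map A.subtype := by
    rw [map_span, Set.image_image]; rfl
  rw [mapSubspace, hc, comap_map_eq_of_injective A.injective_subtype, map_span, map_span,
    Set.image_image, Set.image_image]
  rfl

theorem isStrongMatching_of_forall_invMulInf_le (φ : A ≃ₗ[K] B)
    (h : ∀ a ∈ A, a ≠ 0 → ∀ H : Submodule K L, K ∙ a ⊔ H = A → K ∙ a ⊓ H = ⊥ →
      invMulInf a A B ≤ mapSubspace (φ : A →ₗ[K] B) H) :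
    IsStrongMatching φ := by
  intro n c ⟨hli, hspan⟩ i x hxB hx
  have hsup := span_singleton_sup_span_image_ne (K := K) (fun j => (c j : L)) i
  rw [hspan] at hsup
  have hle := h _ (c i).2 (hli.ne_zero i) _ hsup
    (hli.disjoint_span_singleton_span_image_ne i).eq_bot ⟨hxB, hx⟩
  rwa [mapSubspace_span_image] at hle

theorem IsStrongMatching.invMulInf_le [FiniteDimensional K A] {φ : A ≃ₗ[K] B}
    (hφ : IsStrongMatching φ) {a : L} (ha : a ≠ 0) {H : Submodule K L}
    (hsup : K ∙ a ⊔ H = A) (hinf : K ∙ a ⊓ H = ⊥) :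
    invMulInf a A B ≤ mapSubspace (φ : A →ₗ[K] B) H := by
  have : FiniteDimensional K H := finiteDimensional_of_le (hsup ▸ le_sup_right)
  have haH : a ∉ H := fun haH => by
    have hmem : a ∈ K ∙ a ⊓ H := ⟨mem_span_singleton_self a, haH⟩
    rw [hinf, mem_bot] at hmem
    exact ha hmem
  obtain ⟨m, v, hli, hv⟩ := exists_linearIndependent_finCons_of_notMem haH
  set c : Fin (m + 1) → L := Fin.cons a v
  have hspan : span K (Set.range c) = A := by
    rw [Fin.range_cons, span_insert, hv, hsup]
  have hcA (i : Fin (m + 1)) : c i ∈ A := hspan ▸ subset_span (Set.mem_range_self i)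
  rintro x ⟨hxB, hx⟩
  have hmatched := hφ (m + 1) (fun i => ⟨c i, hcA i⟩) ⟨hli, hspan⟩ 0 x hxB hx
  have himage := mapSubspace_span_image (φ : A →ₗ[K] B) (fun i => ⟨c i, hcA i⟩) {j | j ≠ 0}
  rw [Fin.cons_image_ne_zero a v, hv] at himage
  exact himage ▸ hmatched

end StrongMatching

theorem isStrongMatching_iff_general {K L : Type*} [Field K] [DivisionRing L] [Algebra K L]
    {n : ℕ} (hn : 1 ≤ n) (A B : Submodule K L)
    (hA : Module.finrank K A = n) (φ : A ≃ₗ[K] B) :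
    IsStrongMatching φ ↔
      ∀ a : L, a ∈ A → a ≠ 0 → ∀ H : Submodule K L, H ≤ A →
        Submodule.span K {a} ⊔ H = A → Submodule.span K {a} ⊓ H = ⊥ →
        B ⊓ A.comap (LinearMap.mulLeft K a) ≤
          Submodule.map B.subtype
            (Submodule.map (φ : A →ₗ[K] B) (H.comap A.subtype)) := by
  have : FiniteDimensional K A := Module.finite_of_finrank_pos (by omega)
  exact ⟨fun hφ a _ ha H _ hsup hinf => hφ.invMulInf_le ha hsup hinf,
    fun h => isStrongMatching_of_forall_invMulInf_le φ fun a haA ha H hsup hinf =>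
      h a haA ha H (hsup ▸ le_sup_right) hsup hinf⟩

/-- A `K`-linear isomorphism `φ : A ≃ B` between `n`-dimensional subspaces of `L` is a
strong matching iff for every nonzero `a ∈ A` and every subspace `H ⊆ A` with
`A = Ka ⊕ H`, one has `a⁻¹A ∩ B ⊆ φ(H)`, where `a⁻¹A ∩ B = {x ∈ B : a·x ∈ A}`. -/
theorem isStrongMatching_iff {K L : Type*} [Field K] [DivisionRing L] [Algebra K L]
    {n : ℕ} (hn : 1 ≤ n) (A B : Submodule K L)
    (hA : Module.finrank K A = n) (hB : Module.finrank K B = n) (φ : A ≃ₗ[K] B) :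
    IsStrongMatching φ ↔
      ∀ a : L, a ∈ A → a ≠ 0 → ∀ H : Submodule K L, H ≤ A →
        Submodule.span K {a} ⊔ H = A → Submodule.span K {a} ⊓ H = ⊥ →
        B ⊓ A.comap (LinearMap.mulLeft K a) ≤
          Submodule.map B.subtype
            (Submodule.map (φ : A →ₗ[K] B) (H.comap A.subtype)) :=
  isStrongMatching_iff_general hn A B hA φ
end
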